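/- arXiv:2212.08603 — 6 statements merged into one kernel-verified Lean document; each statement's English description precedes it below -/
import Mathlib

section
/- Assume k₁₀ ≠ 0 on Ω. Let I ⊆ ℝ be a nonempty open interval and Ξ : Ω × I → ℝ a smooth function with ∂_zΞ(t,r,z) ≠ 0 at every point and such that for each (t,r) ∈ Ω the map z ↦ Ξ(t,r,z) is not affine. Assume S(t,r,z₀) ≠ ∅ for every (t,r) ∈ Ω and z₀ ∈ I, and that the Lagrangian L := u²·Ξ(t,r,z) satisfies [δ_w,δ_t]L = 0 and [δ_w,δ_r]L = 0, where [δ_w,δ_t]L := a₆w∂_ṫL + a₇w∂_ṙL + (a₈ṫ+a₉ṙ)∂_wL and [δ_w,δ_r]L := a₁₀w∂_ṫL + a₁₁w∂_ṙL + (a₁₂ṫ+a₁₃ṙ)∂_wL, at all points (t,r,ṫ,ṙ,w) with u > 0, w > 0 and z ∈ I. Then the following relations hold on Ω: a₆ = a·a₇, a₈ = b·a₇, a₉ = (ab+c)·a₇, a₁₀ = a·a₁₁, a₁₂ = b·a₁₁, a₁₃ = (ab+c)·a₁₁. (Equivalently, the Lie brackets [δ_t,δ_w] and [δ_r,δ_w]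 are pointwise proportional to δ_w.) -/
noncomputable section
open Real Set

/-- The base space `(t,r)`. -/
abbrev P2 := ℝ × ℝ
/-- The space of tuples `(t,r,ṫ,ṙ,w)`. -/
abbrev P5 := ℝ × ℝ × ℝ × ℝ × ℝ

/-- `∂f/∂t` -/
def pT (f : P5 → ℝ) (p : P5) : ℝ := fderiv ℝ f p (1, 0, 0, 0, 0)
/-- `∂f/∂r` -/
def pR (f : P5 → ℝ) (p : P5) : ℝ := fderiv ℝ f p (0, 1, 0, 0, 0)
/-- `∂f/∂ṫ` -/
def pTd (f : P5 → ℝ) (p : P5) : ℝ := fderiv ℝ f p (0, 0, 1, 0, 0)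
/-- `∂f/∂ṙ` -/
def pRd (f : P5 → ℝ) (p : P5) : ℝ := fderiv ℝ f p (0, 0, 0, 1, 0)
/-- `∂f/∂w` -/
def pW (f : P5 → ℝ) (p : P5) : ℝ := fderiv ℝ f p (0, 0, 0, 0, 1)

/-- `∂k/∂t` for functions of `(t,r)` only. -/
def dt2 (k : P2 → ℝ) (q : P2) : ℝ := fderiv ℝ k q (1, 0)
/-- `∂k/∂r` for functions of `(t,r)` only. -/
def dr2 (k : P2 → ℝ) (q : P2) : ℝ := fderiv ℝ k q (0, 1)

/-- base point `(t,r)` of `p = (t,r,ṫ,ṙ,w)` -/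
def bp (p : P5) : P2 := (p.1, p.2.1)
/-- the velocity `ṫ` -/
def vT (p : P5) : ℝ := p.2.2.1
/-- the velocity `ṙ` -/
def vR (p : P5) : ℝ := p.2.2.2.1
/-- the velocity `w` -/
def vW (p : P5) : ℝ := p.2.2.2.2

/-- the horizontal derivative `δ_t f` -/
def delT (k : ℕ → P2 → ℝ) (f : P5 → ℝ) (p : P5) : ℝ :=
  pT f p - (k 1 (bp p) * vT p + k 2 (bp p) * vR p) * pTd f p
    - (k 4 (bp p) * vT p + k 6 (bp p) * vR p) * pRd f p
    - k 8 (bp p) * vW p * pW f p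

/-- the horizontal derivative `δ_r f` -/
def delR (k : ℕ → P2 → ℝ) (f : P5 → ℝ) (p : P5) : ℝ :=
  pR f p - (k 2 (bp p) * vT p + k 3 (bp p) * vR p) * pTd f p
    - (k 6 (bp p) * vT p + k 5 (bp p) * vR p) * pRd f p
    - k 9 (bp p) * vW p * pW f p

/-- the operator `δ_w f` -/
def delW (k : ℕ → P2 → ℝ) (f : P5 → ℝ) (p : P5) : ℝ :=
  vW p * k 7 (bp p) * pTd f p + vW p * k 10 (bp p) * pRd f p
    + (k 8 (bp p) * vT p + k 9 (bp p) * vR p) * pW f p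

/-- curvature coefficient `a₁` -/
def a1 (k : ℕ → P2 → ℝ) (q : P2) : ℝ :=
  dr2 (k 1) q - dt2 (k 2) q + k 3 q * k 4 q - k 2 q * k 6 q
/-- curvature coefficient `a₂` -/
def a2 (k : ℕ → P2 → ℝ) (q : P2) : ℝ :=
  dr2 (k 2) q - dt2 (k 3) q + (k 2 q)^2 + k 3 q * k 6 q - k 1 q * k 3 q - k 2 q * k 5 q
/-- curvature coefficient `a₃` -/
def a3 (k : ℕ → P2 → ℝ) (q : P2) : ℝ :=
  dr2 (k 4) q - dt2 (k 6) q + k 1 q * k 6 q + k 4 q * k 5 q - k 2 q * k 4 q - (k 6 q)^2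
/-- curvature coefficient `a₄` -/
def a4 (k : ℕ → P2 → ℝ) (q : P2) : ℝ :=
  dr2 (k 6) q - dt2 (k 5) q + k 2 q * k 6 q - k 3 q * k 4 q
/-- curvature coefficient `a₅` -/
def a5 (k : ℕ → P2 → ℝ) (q : P2) : ℝ := dr2 (k 8) q - dt2 (k 9) q
/-- curvature coefficient `a₆` -/
def a6 (k : ℕ → P2 → ℝ) (q : P2) : ℝ :=
  -dt2 (k 7) q + k 7 q * k 8 q - k 1 q * k 7 q - k 2 q * k 10 q
/-- curvature coefficient `a₇` -/
def a7 (k : ℕ → P2 → ℝ) (q : P2) : ℝ :=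
  -dt2 (k 10) q + k 8 q * k 10 q - k 4 q * k 7 q - k 6 q * k 10 q
/-- curvature coefficient `a₈` -/
def a8 (k : ℕ → P2 → ℝ) (q : P2) : ℝ :=
  -dt2 (k 8) q + k 1 q * k 8 q + k 4 q * k 9 q - (k 8 q)^2
/-- curvature coefficient `a₉` -/
def a9 (k : ℕ → P2 → ℝ) (q : P2) : ℝ :=
  -dt2 (k 9) q + k 2 q * k 8 q + k 6 q * k 9 q - k 8 q * k 9 q
/-- curvature coefficient `a₁₀` -/
def a10 (k : ℕ → P2 → ℝ) (q : P2) : ℝ :=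
  -dr2 (k 7) q + k 7 q * k 9 q - k 2 q * k 7 q - k 3 q * k 10 q
/-- curvature coefficient `a₁₁` -/
def a11 (k : ℕ → P2 → ℝ) (q : P2) : ℝ :=
  -dr2 (k 10) q + k 9 q * k 10 q - k 6 q * k 7 q - k 5 q * k 10 q
/-- curvature coefficient `a₁₂` -/
def a12 (k : ℕ → P2 → ℝ) (q : P2) : ℝ :=
  -dr2 (k 8) q + k 2 q * k 8 q + k 6 q * k 9 q - k 8 q * k 9 q
/-- curvature coefficient `a₁₃` -/
def a13 (k : ℕ → P2 → ℝ) (q : P2) : ℝ :=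
  -dr2 (k 9) q + k 3 q * k 8 q + k 5 q * k 9 q - (k 9 q)^2

/-- `a = k₇/k₁₀` -/
def aa (k : ℕ → P2 → ℝ) (q : P2) : ℝ := k 7 q / k 10 q
/-- `b = k₈/k₁₀` -/
def bb (k : ℕ → P2 → ℝ) (q : P2) : ℝ := k 8 q / k 10 q
/-- `c = (k₉k₁₀ − k₇k₈)/k₁₀²` -/
def cc (k : ℕ → P2 → ℝ) (q : P2) : ℝ := (k 9 q * k 10 q - k 7 q * k 8 q) / (k 10 q)^2

/-- `u = ṫ − a·ṙ` -/
def uV (k : ℕ → P2 → ℝ) (p : P5) : ℝ := vT p - aa k (bp p) * vR p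
/-- `v = c·ṙ² + 2b·ṫ·ṙ − w²` -/
def vV (k : ℕ → P2 → ℝ) (p : P5) : ℝ :=
  cc k (bp p) * (vR p)^2 + 2 * bb k (bp p) * vT p * vR p - (vW p)^2
/-- `z = v/u²` -/
def zV (k : ℕ → P2 → ℝ) (p : P5) : ℝ := vV k p / (uV k p)^2

/-- coefficient `A` -/
def Ac (k : ℕ → P2 → ℝ) (q : P2) : ℝ :=
  bb k q * (aa k q * a1 k q + a2 k q) + (aa k q * bb k q + cc k q) * (aa k q * a3 k q + a4 k q)
    - a5 k q * (2 * aa k q * bb k q + cc k q)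
/-- coefficient `B` -/
def Bc (k : ℕ → P2 → ℝ) (q : P2) : ℝ :=
  aa k q * (aa k q * a3 k q + a4 k q) - (aa k q * a1 k q + a2 k q)
/-- coefficient `C` -/
def Cc (k : ℕ → P2 → ℝ) (q : P2) : ℝ :=
  (aa k q * bb k q + cc k q) * a3 k q + bb k q * (aa k q * a3 k q + a4 k q)
    + bb k q * (a1 k q - 2 * a5 k q)
/-- coefficient `D` -/
def Dc (k : ℕ → P2 → ℝ) (q : P2) : ℝ := aa k q * a3 k q - a1 k q + a5 k q
/-- coefficient `E` -/
def Ec (k : ℕ → P2 → ℝ) (q : P2) : ℝ := bb k q * a3 k q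
/-- coefficient `F` -/
def Fc (k : ℕ → P2 → ℝ) (q : P2) : ℝ := aa k q * a3 k q - a1 k q

/-- `M = 2(k₁ − k₄a)` -/
def Mc (k : ℕ → P2 → ℝ) (q : P2) : ℝ := 2 * (k 1 q - k 4 q * aa k q)
/-- `M̃ = M − 2k₈` -/
def Mtc (k : ℕ → P2 → ℝ) (q : P2) : ℝ := Mc k q - 2 * k 8 q
/-- `N = 2(k₂ − k₆a)` -/
def Nc (k : ℕ → P2 → ℝ) (q : P2) : ℝ := 2 * (k 2 q - k 6 q * aa k q)
/-- `Ñ = N − 2k₉` -/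
def Ntc (k : ℕ → P2 → ℝ) (q : P2) : ℝ := Nc k q - 2 * k 9 q

/-- iterated bracket coefficient `A₁` -/
def A1 (k : ℕ → P2 → ℝ) (q : P2) : ℝ := dt2 (a1 k) q + a3 k q * k 2 q - a2 k q * k 4 q
/-- iterated bracket coefficient `A₂` -/
def A2 (k : ℕ → P2 → ℝ) (q : P2) : ℝ :=
  dt2 (a2 k) q + a2 k q * k 1 q - a1 k q * k 2 q + a4 k q * k 2 q - a2 k q * k 6 q
/-- iterated bracket coefficient `A₃` -/
def A3 (k : ℕ → P2 → ℝ) (q : P2) : ℝ :=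
  dt2 (a3 k) q - a3 k q * k 1 q + a1 k q * k 4 q - a4 k q * k 4 q + a3 k q * k 6 q
/-- iterated bracket coefficient `A₄` -/
def A4 (k : ℕ → P2 → ℝ) (q : P2) : ℝ := dt2 (a4 k) q + a2 k q * k 4 q - a3 k q * k 2 q
/-- iterated bracket coefficient `A₅` -/
def A5 (k : ℕ → P2 → ℝ) (q : P2) : ℝ := dt2 (a5 k) q
/-- iterated bracket coefficient `B₁` -/
def B1 (k : ℕ → P2 → ℝ) (q : P2) : ℝ := dr2 (a1 k) q + a3 k q * k 3 q - a2 k q * k 6 q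
/-- iterated bracket coefficient `B₂` -/
def B2 (k : ℕ → P2 → ℝ) (q : P2) : ℝ :=
  dr2 (a2 k) q + a2 k q * k 2 q - a1 k q * k 3 q + a4 k q * k 3 q - a2 k q * k 5 q
/-- iterated bracket coefficient `B₃` -/
def B3 (k : ℕ → P2 → ℝ) (q : P2) : ℝ :=
  dr2 (a3 k) q - a3 k q * k 2 q + a1 k q * k 6 q - a4 k q * k 6 q + a3 k q * k 5 q
/-- iterated bracket coefficient `B₄` -/
def B4 (k : ℕ → P2 → ℝ) (q : P2) : ℝ := dr2 (a4 k) q + a2 k q * k 6 q - a3 k q * k 3 q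
/-- iterated bracket coefficient `B₅` -/
def B5 (k : ℕ → P2 → ℝ) (q : P2) : ℝ := dr2 (a5 k) q

/-- the domain `Ω × ℝ² × (0,∞)` -/
def D5 (Ω : Set P2) : Set P5 := {p | bp p ∈ Ω ∧ 0 < vW p}

/-- the set `S(t,r,z₀)` of velocities -/
def Sset (k : ℕ → P2 → ℝ) (q : P2) (z0 : ℝ) : Set (ℝ × ℝ) :=
  {v | v.1 - aa k q * v.2 > 0 ∧
    cc k q * v.2^2 + 2 * bb k q * v.1 * v.2 - z0 * (v.1 - aa k q * v.2)^2 > 0}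

/-- `∂Ξ/∂t` for functions of `(t,r,z)` -/
def dT3 (f : ℝ × ℝ × ℝ → ℝ) (s : ℝ × ℝ × ℝ) : ℝ := fderiv ℝ f s (1, 0, 0)
/-- `∂Ξ/∂r` for functions of `(t,r,z)` -/
def dR3 (f : ℝ × ℝ × ℝ → ℝ) (s : ℝ × ℝ × ℝ) : ℝ := fderiv ℝ f s (0, 1, 0)
/-- `∂Ξ/∂z` for functions of `(t,r,z)` -/
def dZ3 (f : ℝ × ℝ × ℝ → ℝ) (s : ℝ × ℝ × ℝ) : ℝ := fderiv ℝ f s (0, 0, 1)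

/-- the domain `Ω × I ⊆ ℝ³` -/
def OI (Ω : Set P2) (I : Set ℝ) : Set (ℝ × ℝ × ℝ) := {s | (s.1, s.2.1) ∈ Ω ∧ s.2.2 ∈ I}

/-- The candidate Berwald Lagrangian `L = u² Ξ(t,r,z)`. -/
def LXi (k : ℕ → P2 → ℝ) (Ξ : ℝ × ℝ × ℝ → ℝ) (p : P5) : ℝ :=
  (uV k p)^2 * Ξ (p.1, p.2.1, zV k p)


open Topology Filter
lemma hasDerivAt_F (Ξ : ℝ × ℝ × ℝ → ℝ) (L : ℝ × ℝ × ℝ →L[ℝ] ℝ)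
    (t r a b c x y w dx dy dw : ℝ)
    (hu : x - a * y ≠ 0)
    (hΞ : HasFDerivAt Ξ L (t, r, (c * y^2 + 2*b*x*y - w^2) / (x - a*y)^2)) :
    HasDerivAt (fun s : ℝ =>
      (x + s*dx - a*(y + s*dy))^2 *
        Ξ (t, r, (c*(y + s*dy)^2 + 2*b*(x + s*dx)*(y + s*dy) - (w + s*dw)^2)
            / (x + s*dx - a*(y + s*dy))^2))
      (2*(x - a*y)*(dx - a*dy) * Ξ (t, r, (c * y^2 + 2*b*x*y - w^2) / (x - a*y)^2)
        + ((2*c*y*dy + 2*b*(dx*y + x*dy) - 2*w*dw)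
            - 2 * ((c * y^2 + 2*b*x*y - w^2) / (x - a*y)^2) * (x - a*y) * (dx - a*dy))
          * L (0,0,1)) 0 := by
  have hU : HasDerivAt (fun s : ℝ => x + s*dx - a*(y + s*dy)) (dx - a*dy) 0 := by
    have h1 : HasDerivAt (fun s : ℝ => x + s*dx) dx 0 := by
      simpa using ((hasDerivAt_id (0:ℝ)).mul_const dx).const_add x
    have h2 : HasDerivAt (fun s : ℝ => a*(y + s*dy)) (a*dy) 0 := by
      simpa using (((hasDerivAt_id (0:ℝ)).mul_const dy).const_add y).const_mul a
    exact h1.sub h2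
  have hU2 : HasDerivAt (fun s : ℝ => (x + s*dx - a*(y + s*dy))^2)
      (2 * (x + 0*dx - a*(y+0*dy))^1 * (dx - a*dy)) 0 := hU.pow 2
  have hV : HasDerivAt (fun s : ℝ => c*(y + s*dy)^2 + 2*b*(x + s*dx)*(y + s*dy) - (w + s*dw)^2)
      (2*c*y*dy + 2*b*(dx*y + x*dy) - 2*w*dw) 0 := by
    have h1 : HasDerivAt (fun s : ℝ => y + s*dy) dy 0 := by
      simpa using ((hasDerivAt_id (0:ℝ)).mul_const dy).const_add y
    have h2 : HasDerivAt (fun s : ℝ => x + s*dx) dx 0 := by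
      simpa using ((hasDerivAt_id (0:ℝ)).mul_const dx).const_add x
    have h3 : HasDerivAt (fun s : ℝ => w + s*dw) dw 0 := by
      simpa using ((hasDerivAt_id (0:ℝ)).mul_const dw).const_add w
    have := (((h1.pow 2).const_mul c).add (((h2.const_mul (2*b)).mul h1))).sub (h3.pow 2)
    refine this.congr_deriv ?_
    push_cast
    ring
  have hU20 : (fun s : ℝ => (x + s*dx - a*(y + s*dy))^2) 0 ≠ 0 := by
    simp only; simpa using pow_ne_zero 2 hu
  have hφ := hV.div hU2 hU20
  have hΓ := (hasDerivAt_const (0:ℝ) t).prodMk ((hasDerivAt_const (0:ℝ) r).prodMk hφ)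
  have hg0 : ((t, r,
      (c*(y + (0:ℝ)*dy)^2 + 2*b*(x + (0:ℝ)*dx)*(y + (0:ℝ)*dy) - (w + (0:ℝ)*dw)^2)
        / (x + (0:ℝ)*dx - a*(y + (0:ℝ)*dy))^2) : ℝ × ℝ × ℝ)
      = (t, r, (c * y^2 + 2*b*x*y - w^2) / (x - a*y)^2) := by norm_num
  rw [show ((t, r, (c * y^2 + 2*b*x*y - w^2) / (x - a*y)^2) : ℝ×ℝ×ℝ)
    = (fun s : ℝ => ((t, r,
      (c*(y + s*dy)^2 + 2*b*(x + s*dx)*(y + s*dy) - (w + s*dw)^2)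
        / (x + s*dx - a*(y + s*dy))^2) : ℝ × ℝ × ℝ)) 0 by norm_num] at hΞ
  have hΞc := hΞ.comp_hasDerivAt 0 hΓ
  have hmain := hU2.mul hΞc
  have hL : ∀ z : ℝ, L (0, 0, z) = z * L (0,0,1) := by
    intro z
    have : ((0:ℝ), (0:ℝ), z) = z • ((0:ℝ), (0:ℝ), (1:ℝ)) := by simp [Prod.ext_iff]
    rw [this, L.map_smul]; rfl
  refine hmain.congr_deriv (Eq.symm ?_)
  conv_rhs => rw [hL]
  simp only [Function.comp_apply]
  norm_num
  generalize x - a*y = u at hu ⊢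
  field_simp
lemma linear_vanish {S : Set (ℝ × ℝ)} (hS : IsOpen S) (hne : S.Nonempty) (c1 c2 : ℝ)
    (h : ∀ v ∈ S, c1 * v.1 + c2 * v.2 = 0) : c1 = 0 ∧ c2 = 0 := by
  obtain ⟨⟨x, y⟩, hxy⟩ := hne
  obtain ⟨ε, hε, hball⟩ := Metric.isOpen_iff.1 hS _ hxy
  have hmem : ∀ d1 d2 : ℝ, |d1| < ε → |d2| < ε → ((x + d1, y + d2) : ℝ × ℝ) ∈ S := by
    intro d1 d2 h1 h2
    apply hball
    rw [Metric.mem_ball, Prod.dist_eq]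
    simp only [Real.dist_eq]
    rw [add_sub_cancel_left, add_sub_cancel_left]
    exact max_lt h1 h2
  have habs : |ε/2| < ε := by rw [abs_of_pos (by linarith)]; linarith
  have habs0 : |(0:ℝ)| < ε := by simpa using hε
  have h0 := h _ hxy
  have h1 := h _ (hmem (ε/2) 0 habs habs0)
  have h2 := h _ (hmem 0 (ε/2) habs0 habs)
  simp only at h0 h1 h2
  constructor
  · have : c1 * (ε/2) = 0 := by linarith
    rcases mul_eq_zero.1 this with h | h
    · exact h
    · linarith
  · have : c2 * (ε/2) = 0 := by linarith
    rcases mul_eq_zero.1 this with h | h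
    · exact h
    · linarith

lemma sset_open (k : ℕ → P2 → ℝ) (q : P2) (z0 : ℝ) : IsOpen (Sset k q z0) := by
  have : Sset k q z0 = {v : ℝ × ℝ | 0 < v.1 - aa k q * v.2} ∩
      {v : ℝ × ℝ | 0 < cc k q * v.2^2 + 2 * bb k q * v.1 * v.2
        - z0 * (v.1 - aa k q * v.2)^2} := by
    ext v; simp only [Sset, Set.mem_setOf_eq, Set.mem_inter_iff, gt_iff_lt]
  rw [this]
  exact (isOpen_lt continuous_const (by fun_prop)).inter
    (isOpen_lt continuous_const (by fun_prop))

lemma oi_open {Ω : Set P2} {I : Set ℝ} (hΩopen : IsOpen Ω) (hIopen : IsOpen I) :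
    IsOpen (OI Ω I) := by
  have : OI Ω I = ((fun s : ℝ×ℝ×ℝ => ((s.1, s.2.1) : P2)) ⁻¹' Ω)
      ∩ ((fun s : ℝ×ℝ×ℝ => s.2.2) ⁻¹' I) := rfl
  rw [this]
  exact (hΩopen.preimage (by fun_prop)).inter (hIopen.preimage (by fun_prop))
lemma affine_of_rel (I : Set ℝ) (hIopen : IsOpen I) (hIconv : Convex ℝ I)
    (g : ℝ → ℝ) (hg : ContDiffOn ℝ (⊤ : ℕ∞) g I) (α β : ℝ) (hα : α ≠ 0)
    (z1 : ℝ) (hz1 : z1 ∈ I)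
    (hrel : ∀ z ∈ I, α * g z = (α * z + β) * deriv g z) :
    ∃ m cst : ℝ, ∀ z ∈ I, g z = m * z + cst := by
  have hgd : DifferentiableOn ℝ g I := hg.differentiableOn (by simp)
  have hg1 : ContDiffOn ℝ (⊤ : ℕ∞) (deriv g) I := hg.deriv_of_isOpen hIopen (by simp)
  have hg1d : DifferentiableOn ℝ (deriv g) I := hg1.differentiableOn (by simp)
  have hg2 : ContDiffOn ℝ (⊤ : ℕ∞) (deriv (deriv g)) I := hg1.deriv_of_isOpen hIopen (by simp)
  have hDg : ∀ z ∈ I, HasDerivAt g (deriv g z) z := fun z hz =>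
    (hgd.differentiableAt (hIopen.mem_nhds hz)).hasDerivAt
  have hDg1 : ∀ z ∈ I, HasDerivAt (deriv g) (deriv (deriv g) z) z := fun z hz =>
    (hg1d.differentiableAt (hIopen.mem_nhds hz)).hasDerivAt
  -- (αz+β) g'' = 0 on I
  have key : ∀ z ∈ I, (α * z + β) * deriv (deriv g) z = 0 := by
    intro z hz
    have t1 : HasDerivAt (fun z => α * g z) (α * deriv g z) z := (hDg z hz).const_mul α
    have t2 : HasDerivAt (fun z : ℝ => α * z + β) α z := by
      simpa using ((hasDerivAt_id z).const_mul α).add_const β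
    have t3 := t2.mul (hDg1 z hz)
    have t4 := t1.sub t3
    have h0 : HasDerivAt (fun z => α * g z - (α * z + β) * deriv g z) 0 z := by
      refine (hasDerivAt_const z 0).congr_of_eventuallyEq ?_
      filter_upwards [hIopen.mem_nhds hz] with w hw
      rw [hrel w hw, sub_self]
    have := h0.unique t4
    nlinarith [this]
  -- g'' = 0 on I
  have hg2zero : ∀ z ∈ I, deriv (deriv g) z = 0 := by
    intro z hz
    by_cases hzz : α * z + β = 0
    · -- z = -β/α ; continuity argument
      have hvanish : ∀ w ∈ I, w ≠ z → deriv (deriv g) w = 0 := by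
        intro w hw hwz
        have hne : α * w + β ≠ 0 := by
          intro h
          apply hwz
          have : α * w = α * z := by linarith
          exact mul_left_cancel₀ hα this
        have := key w hw
        exact (mul_eq_zero.1 this).resolve_left hne
      have hFeq : 𝓝[I \ {z}] z = 𝓝[≠] z := by
        rw [Set.diff_eq, Set.inter_comm]
        exact nhdsWithin_inter_of_mem'
          (mem_nhdsWithin_of_mem_nhds (hIopen.mem_nhds hz))
      haveI : (𝓝[I \ {z}] z).NeBot := by rw [hFeq]; infer_instance
      have t1 : Filter.Tendsto (deriv (deriv g)) (𝓝[I \ {z}] z) (𝓝 (deriv (deriv g) z)) :=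
        ((hg2.continuousOn z hz).mono Set.diff_subset)
      have t2 : Filter.Tendsto (deriv (deriv g)) (𝓝[I \ {z}] z) (𝓝 0) := by
        refine Filter.Tendsto.congr' ?_ tendsto_const_nhds
        filter_upwards [eventually_mem_nhdsWithin] with w hw
        exact (hvanish w hw.1 hw.2).symm
      exact tendsto_nhds_unique t1 t2
    · exact (mul_eq_zero.1 (key z hz)).resolve_left hzz
  -- deriv g constant on I
  have hconst : ∀ z ∈ I, deriv g z = deriv g z1 := by
    intro z hz
    refine hIconv.is_const_of_fderivWithin_eq_zero hg1d ?_ hz hz1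
    intro w hw
    rw [fderivWithin_of_isOpen hIopen hw]
    ext
    simp only [ContinuousLinearMap.zero_apply]
    show fderiv ℝ (deriv g) w 1 = 0
    rw [show fderiv ℝ (deriv g) w 1 = deriv (deriv g) w from rfl, hg2zero w hw]
  -- g is affine
  refine ⟨deriv g z1, g z1 - deriv g z1 * z1, ?_⟩
  intro z hz
  have : g z - deriv g z1 * z = g z1 - deriv g z1 * z1 := by
    refine hIconv.is_const_of_fderivWithin_eq_zero
      (f := fun z => g z - deriv g z1 * z) (hgd.sub (by fun_prop)) ?_ hz hz1
    intro w hw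
    rw [fderivWithin_of_isOpen hIopen hw]
    have hd : HasDerivAt (fun z => g z - deriv g z1 * z) (deriv g w - deriv g z1) w := by
      exact ((hDg w hw).sub (((hasDerivAt_id w).const_mul (deriv g z1)))).congr_deriv (by simp)
    ext
    simp only [ContinuousLinearMap.zero_apply]
    show fderiv ℝ (fun z => g z - deriv g z1 * z) w 1 = 0
    rw [show fderiv ℝ (fun z => g z - deriv g z1 * z) w 1
      = deriv (fun z => g z - deriv g z1 * z) w from rfl, hd.deriv, hconst w hw]
    ring
  linarith [this]
lemma lxi_partials (Ω : Set P2) (hΩopen : IsOpen Ω)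
    (I : Set ℝ) (hIopen : IsOpen I)
    (k : ℕ → P2 → ℝ) (hk : ∀ i, ContDiffOn ℝ (⊤ : ℕ∞) (k i) Ω)
    (Ξ : ℝ × ℝ × ℝ → ℝ) (hΞ : ContDiffOn ℝ (⊤ : ℕ∞) Ξ (OI Ω I))
    (t r x y w : ℝ) (hq : ((t,r) : P2) ∈ Ω) (h10 : k 10 (t,r) ≠ 0)
    (hu : x - aa k (t,r) * y ≠ 0) (hz : zV k (t,r,x,y,w) ∈ I) :
    pTd (LXi k Ξ) (t,r,x,y,w)
      = 2 * (x - aa k (t,r) * y) * Ξ (t, r, zV k (t,r,x,y,w))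
        + (2 * bb k (t,r) * y - 2 * zV k (t,r,x,y,w) * (x - aa k (t,r) * y))
          * dZ3 Ξ (t, r, zV k (t,r,x,y,w)) ∧
    pRd (LXi k Ξ) (t,r,x,y,w)
      = -2 * aa k (t,r) * (x - aa k (t,r) * y) * Ξ (t, r, zV k (t,r,x,y,w))
        + (2 * cc k (t,r) * y + 2 * bb k (t,r) * x
            + 2 * aa k (t,r) * zV k (t,r,x,y,w) * (x - aa k (t,r) * y))
          * dZ3 Ξ (t, r, zV k (t,r,x,y,w)) ∧
    pW (LXi k Ξ) (t,r,x,y,w)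
      = -2 * w * dZ3 Ξ (t, r, zV k (t,r,x,y,w)) := by
  set p : P5 := (t,r,x,y,w) with hp
  have hOIopen : IsOpen (OI Ω I) := by
    have : OI Ω I = ((fun s : ℝ×ℝ×ℝ => ((s.1, s.2.1) : P2)) ⁻¹' Ω)
        ∩ ((fun s : ℝ×ℝ×ℝ => s.2.2) ⁻¹' I) := rfl
    rw [this]
    exact (hΩopen.preimage (by fun_prop)).inter (hIopen.preimage (by fun_prop))
  have hzq : ((t, r, zV k p) : ℝ×ℝ×ℝ) ∈ OI Ω I := ⟨hq, hz⟩
  have hΞd : ContDiffAt ℝ (⊤ : ℕ∞) Ξ ((t, r, zV k p) : ℝ×ℝ×ℝ) :=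
    hΞ.contDiffAt (hOIopen.mem_nhds hzq)
  have hΞfd : HasFDerivAt Ξ (fderiv ℝ Ξ (t, r, zV k p)) (t, r, zV k p) :=
    (hΞd.differentiableAt (by simp)).hasFDerivAt
  -- differentiability of LXi at p
  have hbp : DifferentiableAt ℝ (fun p : P5 => ((p.1, p.2.1) : P2)) p := by fun_prop
  have hki : ∀ i, DifferentiableAt ℝ (fun p : P5 => k i (p.1, p.2.1)) p := fun i =>
    DifferentiableAt.comp p (((hk i).contDiffAt (hΩopen.mem_nhds hq)).differentiableAt (by simp)) hbp
  have h10' : (fun q : P5 => k 10 (q.1, q.2.1)) p ≠ 0 := h10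
  have h10sq : (fun q : P5 => k 10 (q.1, q.2.1) ^ 2) p ≠ 0 := pow_ne_zero 2 h10
  have hA : DifferentiableAt ℝ (fun p : P5 => aa k (p.1,p.2.1)) p := by
    simp only [aa, div_eq_mul_inv]; exact (hki 7).mul ((hki 10).inv h10')
  have hB : DifferentiableAt ℝ (fun p : P5 => bb k (p.1,p.2.1)) p := by
    simp only [bb, div_eq_mul_inv]; exact (hki 8).mul ((hki 10).inv h10')
  have hC : DifferentiableAt ℝ (fun p : P5 => cc k (p.1,p.2.1)) p := by
    simp only [cc, div_eq_mul_inv]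
    exact (((hki 9).mul (hki 10)).sub ((hki 7).mul (hki 8))).mul (((hki 10).pow 2).inv h10sq)
  have hvT : DifferentiableAt ℝ (fun p : P5 => p.2.2.1) p := by fun_prop
  have hvR : DifferentiableAt ℝ (fun p : P5 => p.2.2.2.1) p := by fun_prop
  have hvW : DifferentiableAt ℝ (fun p : P5 => p.2.2.2.2) p := by fun_prop
  have hUeq : uV k = fun p : P5 => p.2.2.1 - aa k (p.1,p.2.1) * p.2.2.2.1 := rfl
  have hU : DifferentiableAt ℝ (uV k) p := by
    rw [hUeq]; exact hvT.sub (hA.mul hvR)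
  have hu' : uV k p ≠ 0 := hu
  have hV : DifferentiableAt ℝ (vV k) p := by
    have : vV k = fun p : P5 =>
        cc k (p.1,p.2.1) * p.2.2.2.1^2 + 2 * bb k (p.1,p.2.1) * p.2.2.1 * p.2.2.2.1
          - p.2.2.2.2^2 := rfl
    rw [this]
    exact ((hC.mul (hvR.pow 2)).add (((hB.const_mul 2).mul hvT).mul hvR)).sub (hvW.pow 2)
  have hZ : DifferentiableAt ℝ (zV k) p := by
    have : zV k = fun p : P5 => vV k p / (uV k p)^2 := rfl
    simp only [this, div_eq_mul_inv]
    have husq : (fun q : P5 => uV k q ^ 2) p ≠ 0 := pow_ne_zero 2 hu'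
    exact hV.mul ((hU.pow 2).inv husq)
  have hG : DifferentiableAt ℝ (fun p : P5 => ((p.1, p.2.1, zV k p) : ℝ×ℝ×ℝ)) p :=
    differentiableAt_fst.prodMk (differentiableAt_snd.fst.prodMk hZ)
  have hLd : DifferentiableAt ℝ (LXi k Ξ) p := by
    have : LXi k Ξ = fun p : P5 => (uV k p)^2 * Ξ (p.1, p.2.1, zV k p) := rfl
    rw [this]
    exact (hU.pow 2).mul
      (DifferentiableAt.comp p (hΞd.differentiableAt (by simp)) hG)
  have hfd := hLd.hasFDerivAt
  have hcomp : ∀ e : P5,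
      HasDerivAt (fun s : ℝ => LXi k Ξ (p + s • e)) (fderiv ℝ (LXi k Ξ) p e) 0 := by
    intro e
    have hcurve : HasDerivAt (fun s : ℝ => p + s • e) e 0 := by
      simpa using ((hasDerivAt_id (0:ℝ)).smul_const e).const_add p
    have hfd' : HasFDerivAt (LXi k Ξ) (fderiv ℝ (LXi k Ξ) p) ((fun s : ℝ => p + s • e) 0) := by
      simpa using hfd
    simpa [Function.comp_def] using hfd'.comp_hasDerivAt 0 hcurve
  refine ⟨?_, ?_, ?_⟩
  · have hF := hasDerivAt_F Ξ (fderiv ℝ Ξ (t, r, zV k p)) t r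
      (aa k (t,r)) (bb k (t,r)) (cc k (t,r)) x y w 1 0 0 hu hΞfd
    have hfun : (fun s : ℝ =>
        (x + s*1 - aa k (t,r)*(y + s*0))^2 *
          Ξ (t, r, (cc k (t,r)*(y + s*0)^2 + 2*(bb k (t,r))*(x + s*1)*(y + s*0) - (w + s*0)^2)
              / (x + s*1 - aa k (t,r)*(y + s*0))^2))
        = fun s : ℝ => LXi k Ξ (p + s • ((0,0,1,0,0) : P5)) := by
      funext s
      show _ = LXi k Ξ ((t + s*0, r + s*0, x + s*1, y + s*0, w + s*0) : P5)
      simp only [LXi, uV, vV, zV, vT, vR, vW, bp]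
      norm_num
    rw [hfun] at hF
    have h1 := (hcomp ((0,0,1,0,0) : P5)).unique hF
    have h2 : pTd (LXi k Ξ) p = fderiv ℝ (LXi k Ξ) p ((0,0,1,0,0) : P5) := rfl
    rw [h2, h1,
      show (cc k (t,r) * y^2 + 2*(bb k (t,r))*x*y - w^2) / (x - aa k (t,r)*y)^2
        = zV k p from rfl,
      show fderiv ℝ Ξ (t, r, zV k p) (0,0,1) = dZ3 Ξ (t, r, zV k p) from rfl]
    ring
  · have hF := hasDerivAt_F Ξ (fderiv ℝ Ξ (t, r, zV k p)) t r
      (aa k (t,r)) (bb k (t,r)) (cc k (t,r)) x y w 0 1 0 hu hΞfd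
    have hfun : (fun s : ℝ =>
        (x + s*0 - aa k (t,r)*(y + s*1))^2 *
          Ξ (t, r, (cc k (t,r)*(y + s*1)^2 + 2*(bb k (t,r))*(x + s*0)*(y + s*1) - (w + s*0)^2)
              / (x + s*0 - aa k (t,r)*(y + s*1))^2))
        = fun s : ℝ => LXi k Ξ (p + s • ((0,0,0,1,0) : P5)) := by
      funext s
      show _ = LXi k Ξ ((t + s*0, r + s*0, x + s*0, y + s*1, w + s*0) : P5)
      simp only [LXi, uV, vV, zV, vT, vR, vW, bp]
      norm_num
    rw [hfun] at hF
    have h1 := (hcomp ((0,0,0,1,0) : P5)).unique hF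
    have h2 : pRd (LXi k Ξ) p = fderiv ℝ (LXi k Ξ) p ((0,0,0,1,0) : P5) := rfl
    rw [h2, h1,
      show (cc k (t,r) * y^2 + 2*(bb k (t,r))*x*y - w^2) / (x - aa k (t,r)*y)^2
        = zV k p from rfl,
      show fderiv ℝ Ξ (t, r, zV k p) (0,0,1) = dZ3 Ξ (t, r, zV k p) from rfl]
    ring
  · have hF := hasDerivAt_F Ξ (fderiv ℝ Ξ (t, r, zV k p)) t r
      (aa k (t,r)) (bb k (t,r)) (cc k (t,r)) x y w 0 0 1 hu hΞfd
    have hfun : (fun s : ℝ =>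
        (x + s*0 - aa k (t,r)*(y + s*0))^2 *
          Ξ (t, r, (cc k (t,r)*(y + s*0)^2 + 2*(bb k (t,r))*(x + s*0)*(y + s*0) - (w + s*1)^2)
              / (x + s*0 - aa k (t,r)*(y + s*0))^2))
        = fun s : ℝ => LXi k Ξ (p + s • ((0,0,0,0,1) : P5)) := by
      funext s
      show _ = LXi k Ξ ((t + s*0, r + s*0, x + s*0, y + s*0, w + s*1) : P5)
      simp only [LXi, uV, vV, zV, vT, vR, vW, bp]
      norm_num
    rw [hfun] at hF
    have h1 := (hcomp ((0,0,0,0,1) : P5)).unique hF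
    have h2 : pW (LXi k Ξ) p = fderiv ℝ (LXi k Ξ) p ((0,0,0,0,1) : P5) := rfl
    rw [h2, h1,
      show fderiv ℝ Ξ (t, r, zV k p) (0,0,1) = dZ3 Ξ (t, r, zV k p) from rfl]
    ring

lemma master (Ω : Set P2) (hΩopen : IsOpen Ω)
    (I : Set ℝ) (hIopen : IsOpen I) (hIne : I.Nonempty) (hIconn : I.OrdConnected)
    (k : ℕ → P2 → ℝ) (hk : ∀ i, ContDiffOn ℝ (⊤ : ℕ∞) (k i) Ω)
    (Ξ : ℝ × ℝ × ℝ → ℝ) (hΞ : ContDiffOn ℝ (⊤ : ℕ∞) Ξ (OI Ω I))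
    (hΞz : ∀ s ∈ OI Ω I, dZ3 Ξ s ≠ 0)
    (t r : ℝ) (hq : ((t,r) : P2) ∈ Ω) (h10 : k 10 (t,r) ≠ 0)
    (hna : ¬ ∃ m c : ℝ, ∀ z ∈ I, Ξ (t, r, z) = m * z + c)
    (hS : ∀ z0 ∈ I, (Sset k (t,r) z0).Nonempty)
    (A6 A7 A8 A9 : ℝ)
    (hbr : ∀ x y w : ℝ, 0 < x - aa k (t,r) * y → 0 < w →
        zV k (t,r,x,y,w) ∈ I →
      A6 * w * pTd (LXi k Ξ) (t,r,x,y,w) + A7 * w * pRd (LXi k Ξ) (t,r,x,y,w)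
        + (A8 * x + A9 * y) * pW (LXi k Ξ) (t,r,x,y,w) = 0) :
    A6 = aa k (t,r) * A7 ∧ A8 = bb k (t,r) * A7 ∧
      A9 = (aa k (t,r) * bb k (t,r) + cc k (t,r)) * A7 := by
  set α := A6 - aa k (t,r) * A7 with hαdef
  set β := A8 - bb k (t,r) * A7 with hβdef
  set γ := A9 - (aa k (t,r) * bb k (t,r) + cc k (t,r)) * A7 with hγdef
  -- Step 1: the two coefficient equations for each z0 ∈ I
  have hstep : ∀ z0 ∈ I,
      Ξ (t,r,z0) * α - dZ3 Ξ (t,r,z0) * (β + z0 * α) = 0 ∧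
      -(aa k (t,r)) * Ξ (t,r,z0) * α
        + dZ3 Ξ (t,r,z0) * (α * bb k (t,r) - γ + z0 * α * aa k (t,r)) = 0 := by
    intro z0 hz0
    have hlin := linear_vanish (sset_open k (t,r) z0) (hS z0 hz0)
      (Ξ (t,r,z0) * α - dZ3 Ξ (t,r,z0) * (β + z0 * α))
      (-(aa k (t,r)) * Ξ (t,r,z0) * α
        + dZ3 Ξ (t,r,z0) * (α * bb k (t,r) - γ + z0 * α * aa k (t,r)))
      ?_
    · constructor
      · exact hlin.1
      · exact hlin.2
    intro v hv
    obtain ⟨hv1, hv2⟩ := hv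
    set w := Real.sqrt (cc k (t,r) * v.2^2 + 2 * bb k (t,r) * v.1 * v.2
      - z0 * (v.1 - aa k (t,r) * v.2)^2) with hwdef
    have hw : 0 < w := Real.sqrt_pos.2 hv2
    have hw2 : w^2 = cc k (t,r) * v.2^2 + 2 * bb k (t,r) * v.1 * v.2
        - z0 * (v.1 - aa k (t,r) * v.2)^2 := Real.sq_sqrt hv2.le
    have hune : v.1 - aa k (t,r) * v.2 ≠ 0 := ne_of_gt hv1
    have hzv : zV k (t,r,v.1,v.2,w) = z0 := by
      show (cc k (t,r) * v.2^2 + 2 * bb k (t,r) * v.1 * v.2 - w^2)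
        / (v.1 - aa k (t,r) * v.2)^2 = z0
      rw [hw2]
      rw [div_eq_iff (pow_ne_zero 2 hune)]
      ring
    have hzmem : zV k (t,r,v.1,v.2,w) ∈ I := by rw [hzv]; exact hz0
    have hparts := lxi_partials Ω hΩopen I hIopen k hk Ξ hΞ t r v.1 v.2 w hq h10 hune hzmem
    have hE := hbr v.1 v.2 w hv1 hw hzmem
    rw [hparts.1, hparts.2.1, hparts.2.2, hzv] at hE
    have h2w : (2 * w) * ((Ξ (t,r,z0) * α - dZ3 Ξ (t,r,z0) * (β + z0 * α)) * v.1
        + (-(aa k (t,r)) * Ξ (t,r,z0) * α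
          + dZ3 Ξ (t,r,z0) * (α * bb k (t,r) - γ + z0 * α * aa k (t,r))) * v.2) = 0 := by
      rw [hαdef, hβdef, hγdef]
      linear_combination hE
    have := mul_eq_zero.1 h2w
    rcases this with h | h
    · linarith
    · exact h
  -- Step 2: γ = α·b − a·β
  obtain ⟨z1, hz1⟩ := hIne
  have hz1OI : ((t,r,z1) : ℝ×ℝ×ℝ) ∈ OI Ω I := ⟨hq, hz1⟩
  have hγeq : γ = α * bb k (t,r) - aa k (t,r) * β := by
    obtain ⟨h1, h2⟩ := hstep z1 hz1
    have h3 : dZ3 Ξ (t,r,z1) * (α * bb k (t,r) - γ - aa k (t,r) * β) = 0 := by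
      linear_combination aa k (t,r) * h1 + h2
    have := (mul_eq_zero.1 h3).resolve_left (hΞz _ hz1OI)
    linarith
  -- Step 3: α = 0
  have hα0 : α = 0 := by
    by_contra hα
    set g : ℝ → ℝ := fun z => Ξ (t, r, z) with hgdef
    have hline : ContDiff ℝ (⊤ : ℕ∞) (fun z : ℝ => ((t, r, z) : ℝ×ℝ×ℝ)) :=
      (contDiff_const.prodMk (contDiff_const.prodMk contDiff_id))
    have hgI : ContDiffOn ℝ (⊤ : ℕ∞) g I :=
      hΞ.comp hline.contDiffOn (fun z hz => ⟨hq, hz⟩)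
    have hderiv : ∀ z ∈ I, deriv g z = dZ3 Ξ (t,r,z) := by
      intro z hz
      have hΞfd : HasFDerivAt Ξ (fderiv ℝ Ξ (t,r,z)) (t,r,z) :=
        ((hΞ.contDiffAt ((oi_open hΩopen hIopen).mem_nhds ⟨hq, hz⟩)).differentiableAt
          (by simp)).hasFDerivAt
      have hcurve : HasDerivAt (fun z' : ℝ => ((t, r, z') : ℝ×ℝ×ℝ))
          (((0 : ℝ), (0 : ℝ), (1 : ℝ)) : ℝ×ℝ×ℝ) z :=
        (hasDerivAt_const z t).prodMk ((hasDerivAt_const z r).prodMk (hasDerivAt_id z))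
      exact (hΞfd.comp_hasDerivAt z hcurve).deriv
    have hrel : ∀ z ∈ I, α * g z = (α * z + β) * deriv g z := by
      intro z hz
      rw [hderiv z hz]
      have := (hstep z hz).1
      show α * Ξ (t,r,z) = (α * z + β) * dZ3 Ξ (t,r,z)
      linear_combination this
    obtain ⟨m, cst, hmc⟩ := affine_of_rel I hIopen
      (convex_iff_ordConnected.2 hIconn) g hgI α β hα z1 hz1 hrel
    exact hna ⟨m, cst, hmc⟩
  -- Step 4: β = 0, γ = 0
  have hβ0 : β = 0 := by
    have h1 := (hstep z1 hz1).1
    rw [hα0] at h1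
    have h2 : dZ3 Ξ (t,r,z1) * β = 0 := by linear_combination -h1
    have := (mul_eq_zero.1 h2).resolve_left (hΞz _ hz1OI)
    exact this
  have hγ0 : γ = 0 := by rw [hγeq, hα0, hβ0]; ring
  refine ⟨by linarith [hα0, hαdef ▸ hα0], ?_, ?_⟩
  · have := hβdef ▸ hβ0; linarith
  · have := hγdef ▸ hγ0; linarith
/-- If the candidate Berwald Lagrangian `L = u²Ξ(t,r,z)` (with `Ξ` genuinely
non-quadratic, `∂_zΞ ≠ 0`) is annihilated by the brackets `[δ_w,δ_t]` and `[δ_w,δ_r]`, then the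
curvature relations `a₆ = a·a₇`, `a₈ = b·a₇`, `a₉ = (ab+c)·a₇`, `a₁₀ = a·a₁₁`, `a₁₂ = b·a₁₁`,
`a₁₃ = (ab+c)·a₁₁` hold; i.e. `[δ_t,δ_w]` and `[δ_r,δ_w]` are proportional to `δ_w`. -/
theorem stmt8 (Ω : Set P2) (hΩopen : IsOpen Ω) (hΩne : Ω.Nonempty)
    (k : ℕ → P2 → ℝ) (hk : ∀ i, ContDiffOn ℝ (⊤ : ℕ∞) (k i) Ω)
    (hk10 : ∀ q ∈ Ω, k 10 q ≠ 0)
    (I : Set ℝ) (hIopen : IsOpen I) (hIne : I.Nonempty) (hIconn : I.OrdConnected)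
    (Ξ : ℝ × ℝ × ℝ → ℝ) (hΞ : ContDiffOn ℝ (⊤ : ℕ∞) Ξ (OI Ω I))
    (hΞz : ∀ s ∈ OI Ω I, dZ3 Ξ s ≠ 0)
    (hΞnonaff : ∀ q ∈ Ω, ¬ ∃ α β : ℝ, ∀ z ∈ I, Ξ (q.1, q.2, z) = α * z + β)
    (hS : ∀ q ∈ Ω, ∀ z0 ∈ I, (Sset k q z0).Nonempty)
    (hbrackets : ∀ p : P5, bp p ∈ Ω → 0 < uV k p → 0 < vW p → zV k p ∈ I →
      a6 k (bp p) * vW p * pTd (LXi k Ξ) p + a7 k (bp p) * vW p * pRd (LXi k Ξ) p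
        + (a8 k (bp p) * vT p + a9 k (bp p) * vR p) * pW (LXi k Ξ) p = 0 ∧
      a10 k (bp p) * vW p * pTd (LXi k Ξ) p + a11 k (bp p) * vW p * pRd (LXi k Ξ) p
        + (a12 k (bp p) * vT p + a13 k (bp p) * vR p) * pW (LXi k Ξ) p = 0) :
    ∀ q ∈ Ω,
      a6 k q = aa k q * a7 k q ∧
      a8 k q = bb k q * a7 k q ∧
      a9 k q = (aa k q * bb k q + cc k q) * a7 k q ∧
      a10 k q = aa k q * a11 k q ∧
      a12 k q = bb k q * a11 k q ∧
      a13 k q = (aa k q * bb k q + cc k q) * a11 k q := by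
  intro q hq
  obtain ⟨t, r⟩ := q
  have h10 := hk10 (t,r) hq
  have hna : ¬ ∃ m c : ℝ, ∀ z ∈ I, Ξ (t, r, z) = m * z + c := hΞnonaff (t,r) hq
  have hS' : ∀ z0 ∈ I, (Sset k (t,r) z0).Nonempty := fun z0 hz0 => hS (t,r) hq z0 hz0
  have hbr1 : ∀ x y w : ℝ, 0 < x - aa k (t,r) * y → 0 < w → zV k (t,r,x,y,w) ∈ I →
      a6 k (t,r) * w * pTd (LXi k Ξ) (t,r,x,y,w) + a7 k (t,r) * w * pRd (LXi k Ξ) (t,r,x,y,w)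
        + (a8 k (t,r) * x + a9 k (t,r) * y) * pW (LXi k Ξ) (t,r,x,y,w) = 0 := by
    intro x y w hu hw hz
    exact (hbrackets (t,r,x,y,w) hq hu hw hz).1
  have hbr2 : ∀ x y w : ℝ, 0 < x - aa k (t,r) * y → 0 < w → zV k (t,r,x,y,w) ∈ I →
      a10 k (t,r) * w * pTd (LXi k Ξ) (t,r,x,y,w) + a11 k (t,r) * w * pRd (LXi k Ξ) (t,r,x,y,w)
        + (a12 k (t,r) * x + a13 k (t,r) * y) * pW (LXi k Ξ) (t,r,x,y,w) = 0 := by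
    intro x y w hu hw hz
    exact (hbrackets (t,r,x,y,w) hq hu hw hz).2
  obtain ⟨e1, e2, e3⟩ := master Ω hΩopen I hIopen hIne hIconn k hk Ξ hΞ hΞz t r hq h10 hna hS'
    (a6 k (t,r)) (a7 k (t,r)) (a8 k (t,r)) (a9 k (t,r)) hbr1
  obtain ⟨f1, f2, f3⟩ := master Ω hΩopen I hIopen hIne hIconn k hk Ξ hΞ hΞz t r hq h10 hna hS'
    (a10 k (t,r)) (a11 k (t,r)) (a12 k (t,r)) (a13 k (t,r)) hbr2
  exact ⟨e1, e2, e3, f1, f2, f3⟩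
end
end

section
/- Let k₇,k₈,k₉,k₁₀,a₁,a₂,a₃,a₄,a₅ ∈ ℝ with k₁₀ ≠ 0, and set a = k₇/k₁₀, b = k₈/k₁₀, c = (k₉k₁₀ − k₇k₈)/k₁₀². Define A = b(aa₁+a₂) + (ab+c)(aa₃+a₄) − a₅(2ab+c), B = a(aa₃+a₄) − (aa₁+a₂), C = (ab+c)a₃ + b(aa₃+a₄) + b(a₁ − 2a₅), D = aa₃ − a₁ + a₅, E = ba₃, F = aa₃ − a₁. Then A = B = C = D = E = F = 0 if and only if both of the following hold: (i) for all ṫ,ṙ ∈ ℝ and all w > 0 there exists α ∈ ℝ with (a₁ṫ + a₂ṙ, a₃ṫ + a₄ṙ, a₅w) = α·(k₇w, k₁₀w, k₈ṫ + k₉ṙ); and (ii) either a₁ = a₂ = a₃ = a₄ = a₅ = 0 or k₈ = k₉ = 0. (Condition (i) says that the bracket [δ_t,δ_r] = (a₁ṫ+a₂ṙ)∂_ṫ + (a₃ṫ+a₄ṙ)∂_ṙ + a₅w∂_w is pointwise proportional to δ_w = k₇w∂_ṫ + k₁₀w∂_ṙ + (k₈ṫ+k₉ṙ)∂_w, and (ii)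 says that the proportionality factor is zero or b = c = 0.) -/
/-!
As `k₁₀ ≠ 0`, proportionality to `δ_w` forces `α = (a₃ṫ + a₄ṙ) / (k₁₀ w)`, so (i) says exactly that
`a₅ = 0`, `(a₁, a₂) = a (a₃, a₄)`, and that the product of the linear forms `a₃ṫ + a₄ṙ` and
`k₈ṫ + k₉ṙ` vanishes identically, i.e. one of the two forms is zero. Since `k₈ = b k₁₀` and
`k₉ = (ab + c) k₁₀`, the equations `A = ⋯ = F = 0` are invertible linear combinations of the same
conditions written in `a, b, c`.
-/

theorem exists_proportional_iff {K : Type*} [Field K] {x y z p q s : K} (hq : q ≠ 0) :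
    (∃ α, x = α * p ∧ y = α * q ∧ z = α * s) ↔ x * q = y * p ∧ z * q = y * s := by
  constructor
  · rintro ⟨α, rfl, rfl, rfl⟩
    constructor <;> ring
  · rintro ⟨hx, hz⟩
    refine ⟨y / q, ?_, by field_simp, ?_⟩
    · field_simp; linear_combination hx
    · field_simp; linear_combination hz

theorem mul_eq_zero_and_cross_eq_zero_iff {R : Type*} [CommRing R] [NoZeroDivisors R]
    {p q u v : R} :
    (p * u = 0 ∧ q * v = 0 ∧ p * v + q * u = 0) ↔ (p = 0 ∧ q = 0) ∨ (u = 0 ∧ v = 0) := by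
  constructor
  · rintro ⟨hpu, hqv, hcross⟩
    by_cases hp : p = 0
    · subst hp
      have hqu : q * u = 0 := by simpa using hcross
      by_cases hq : q = 0
      · exact Or.inl ⟨rfl, hq⟩
      · exact Or.inr ⟨(mul_eq_zero.mp hqu).resolve_left hq, (mul_eq_zero.mp hqv).resolve_left hq⟩
    · obtain rfl : u = 0 := (mul_eq_zero.mp hpu).resolve_left hp
      exact Or.inr ⟨rfl, (mul_eq_zero.mp (by simpa using hcross)).resolve_left hp⟩
  · rintro (⟨rfl, rfl⟩ | ⟨rfl, rfl⟩) <;> simp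

theorem forall_mul_linear_forms_eq_zero_iff {R : Type*} [CommRing R] [NoZeroDivisors R]
    {p q u v : R} :
    (∀ t r : R, (p * t + q * r) * (u * t + v * r) = 0) ↔ (p = 0 ∧ q = 0) ∨ (u = 0 ∧ v = 0) := by
  rw [← mul_eq_zero_and_cross_eq_zero_iff]
  refine ⟨fun h => ⟨by simpa using h 1 0, by simpa using h 0 1, ?_⟩,
    fun ⟨hpu, hqv, hcross⟩ t r => ?_⟩
  · linear_combination h 1 1 - h 1 0 - h 0 1
  · linear_combination t ^ 2 * hpu + r ^ 2 * hqv + t * r * hcross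

section
variable {K : Type*} [Field K] [LinearOrder K] [IsStrictOrderedRing K]
  {k7 k8 k9 k10 a1 a2 a3 a4 a5 : K}

theorem bracket_proportional_iff (hk10 : k10 ≠ 0) :
    (∀ td rd w : K, 0 < w → ∃ α : K,
        a1 * td + a2 * rd = α * (k7 * w) ∧
        a3 * td + a4 * rd = α * (k10 * w) ∧
        a5 * w = α * (k8 * td + k9 * rd)) ↔
      a5 = 0 ∧ a1 * k10 = a3 * k7 ∧ a2 * k10 = a4 * k7 ∧
        ((a3 = 0 ∧ a4 = 0) ∨ (k8 = 0 ∧ k9 = 0)) := by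
  constructor
  · intro h
    have hrel : ∀ td rd : K, (a1 * td + a2 * rd) * k10 = (a3 * td + a4 * rd) * k7 ∧
        a5 * k10 = (a3 * td + a4 * rd) * (k8 * td + k9 * rd) := fun td rd => by
      simpa using (exists_proportional_iff hk10).1 (by simpa using h td rd 1 one_pos)
    have ha5 : a5 = 0 := by simpa [hk10] using (hrel 0 0).2
    refine ⟨ha5, by simpa using (hrel 1 0).1, by simpa using (hrel 0 1).1, ?_⟩
    exact forall_mul_linear_forms_eq_zero_iff.1 fun t r => by rw [← (hrel t r).2, ha5, zero_mul]
  · rintro ⟨rfl, h1, h2, hfactor⟩ td rd w hw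
    rw [exists_proportional_iff (mul_ne_zero hk10 hw.ne'),
      forall_mul_linear_forms_eq_zero_iff.2 hfactor td rd]
    constructor
    · linear_combination (td * w) * h1 + (rd * w) * h2
    · ring
end

theorem curvature_equations_iff {R : Type*} [CommRing R] [NoZeroDivisors R]
    (a b c a1 a2 a3 a4 a5 : R) :
    (b * (a * a1 + a2) + (a * b + c) * (a * a3 + a4) - a5 * (2 * a * b + c) = 0 ∧
        a * (a * a3 + a4) - (a * a1 + a2) = 0 ∧
        (a * b + c) * a3 + b * (a * a3 + a4) + b * (a1 - 2 * a5) = 0 ∧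
        a * a3 - a1 + a5 = 0 ∧ b * a3 = 0 ∧ a * a3 - a1 = 0) ↔
      a5 = 0 ∧ a1 = a * a3 ∧ a2 = a * a4 ∧
        ((a3 = 0 ∧ a4 = 0) ∨ (b = 0 ∧ a * b + c = 0)) := by
  rw [← mul_eq_zero_and_cross_eq_zero_iff]
  constructor
  · rintro ⟨hA, hB, hC, hD, hE, hF⟩
    refine ⟨by linear_combination hD - hF, by linear_combination -hF,
      by linear_combination a * hF - hB, by linear_combination hE, ?_, ?_⟩
    · linear_combination hA + b * hB - a * hC + a ^ 2 * hE + c * hD - (a * b + c) * hF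
    · linear_combination hC - 2 * a * hE - b * hF + 2 * b * hD
  · rintro ⟨rfl, rfl, rfl, h3, h4, hcross⟩
    refine ⟨?_, by ring, ?_, by ring, by linear_combination h3, by ring⟩
    · linear_combination a ^ 2 * h3 + a * hcross + h4
    · linear_combination hcross + 2 * a * h3

/-- pointwise algebraic form of Lemma 2 of the paper.
`A = B = C = D = E = F = 0` iff the bracket `[δ_t,δ_r]` is pointwise proportional to `δ_w`
and the proportionality factor is zero or `b = c = 0`. -/
theorem stmt9 (k7 k8 k9 k10 a1 a2 a3 a4 a5 a b c A B C D E F : ℝ)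
    (hk10 : k10 ≠ 0)
    (ha : a = k7 / k10) (hb : b = k8 / k10) (hc : c = (k9 * k10 - k7 * k8) / k10 ^ 2)
    (hA : A = b * (a * a1 + a2) + (a * b + c) * (a * a3 + a4) - a5 * (2 * a * b + c))
    (hB : B = a * (a * a3 + a4) - (a * a1 + a2))
    (hC : C = (a * b + c) * a3 + b * (a * a3 + a4) + b * (a1 - 2 * a5))
    (hD : D = a * a3 - a1 + a5) (hE : E = b * a3) (hF : F = a * a3 - a1) :
    (A = 0 ∧ B = 0 ∧ C = 0 ∧ D = 0 ∧ E = 0 ∧ F = 0) ↔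
      ((∀ td rd w : ℝ, 0 < w → ∃ α : ℝ,
          a1 * td + a2 * rd = α * (k7 * w) ∧
          a3 * td + a4 * rd = α * (k10 * w) ∧
          a5 * w = α * (k8 * td + k9 * rd)) ∧
        ((a1 = 0 ∧ a2 = 0 ∧ a3 = 0 ∧ a4 = 0 ∧ a5 = 0) ∨ (k8 = 0 ∧ k9 = 0))) := by
  have hk7 : k7 = a * k10 := by rw [ha]; field_simp
  have hk8 : k8 = b * k10 := by rw [hb]; field_simp
  have hk9 : k9 = (a * b + c) * k10 := by rw [ha, hb, hc]; field_simp; ring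
  subst hA hB hC hD hE hF hk7 hk8 hk9
  rw [curvature_equations_iff, bracket_proportional_iff hk10]
  have hcancel : ∀ x y : ℝ, x * k10 = y * (a * k10) ↔ x = a * y := fun x y => by
    rw [← mul_assoc, mul_left_inj' hk10, mul_comm y]
  simp only [hcancel, mul_eq_zero, hk10, or_false]
  refine (and_iff_left_of_imp ?_).symm
  rintro ⟨rfl, rfl, rfl, ⟨rfl, rfl⟩ | hk⟩
  · simp
  · exact Or.inr hk
end

section
/- Assume k₁₀ ≠ 0 on Ω. Let I ⊆ ℝ be a nonempty open interval and Ξ : Ω × I → ℝ a smooth function with ∂_zΞ(t,r,z) ≠ 0 at every point, and assume S(t,r,z₀) ≠ ∅ for every (t,r) ∈ Ω and z₀ ∈ I. If the Lagrangian L := u²·Ξ(t,r,z) satisfies [δ_t,δ_r]L := (a₁ṫ + a₂ṙ)∂_ṫL + (a₃ṫ + a₄ṙ)∂_ṙL + a₅w∂_wL = 0 at all points (t,r,ṫ,ṙ,w) with u > 0, w > 0 and z ∈ I, then A = 0 on Ω, and for each (t,r) ∈ Ω one of the following holds: either z ↦ Ξ(t,r,z) is an affine function of z (so that L is quadratic in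 the velocities, i.e. pseudo-Riemannian, over that point), or B(t,r) = C(t,r) = 0 and (D(t,r)z + E(t,r))·∂_zΞ(t,r,z) = F(t,r)·Ξ(t,r,z) for all z ∈ I. -/
noncomputable section
open Real Set

lemma poly1_zero {A B C ε : ℝ} (hε : 0 < ε)
    (h : ∀ s, |s| < ε → A * s^2 + B * s + C = 0) : A = 0 ∧ B = 0 ∧ C = 0 := by
  have h0 := h 0 (by simpa using hε)
  have h1 := h (ε/2) (by rw [abs_of_pos (by linarith)]; linarith)
  have h2 := h (-(ε/2)) (by rw [abs_of_neg (by linarith)]; simp; linarith)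
  have hC : C = 0 := by linarith [h0]
  have hε2 : ε^2 ≠ 0 := pow_ne_zero _ (ne_of_gt hε)
  have hA : A = 0 := by
    have h3 : A * ε^2 = 0 := by nlinarith [h1, h2]
    rcases mul_eq_zero.1 h3 with h | h
    · exact h
    · exact absurd h hε2
  refine ⟨hA, ?_, hC⟩
  have : B * (ε/2) = 0 := by nlinarith [h1]
  rcases mul_eq_zero.1 this with h | h
  · exact h
  · exfalso; linarith

lemma quad2_zero {α β γ x₀ y₀ ε : ℝ} (hε : 0 < ε)
    (h : ∀ x y, |x - x₀| < ε → |y - y₀| < ε → α * x^2 + β * x * y + γ * y^2 = 0) :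
    α = 0 ∧ β = 0 ∧ γ = 0 := by
  have key : ∀ t, |t| < ε → α = 0 ∧ (α*(2*x₀) + β*(y₀+t)) = 0 ∧
      (α*x₀^2 + β*(x₀*(y₀+t)) + γ*(y₀+t)^2) = 0 := by
    intro t ht
    apply poly1_zero hε
    intro s hs
    have := h (x₀ + s) (y₀ + t) (by simpa using hs) (by simpa using ht)
    linear_combination this
  have hα : α = 0 := (key 0 (by simpa using hε)).1
  have hβ : β = 0 := by
    have k1 := (key (ε/2) (by rw [abs_of_pos (by linarith)]; linarith)).2.1
    have k2 := (key (-(ε/2)) (by rw [abs_of_neg (by linarith)]; simp; linarith)).2.1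
    have : β * ε = 0 := by linear_combination k1 - k2
    rcases mul_eq_zero.1 this with h | h
    · exact h
    · exact absurd h (ne_of_gt hε)
  have hγ : γ = 0 := by
    have k1 := (key (ε/2) (by rw [abs_of_pos (by linarith)]; linarith)).2.2
    have k2 := (key (-(ε/2)) (by rw [abs_of_neg (by linarith)]; simp; linarith)).2.2
    rw [hα, hβ] at k1 k2
    have h3 : γ * (y₀^2 + (ε/2)^2) = 0 := by linear_combination (k1+k2)/2
    have hpos : y₀^2 + (ε/2)^2 > 0 := by positivity
    rcases mul_eq_zero.1 h3 with h | h
    · exact h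
    · exfalso; nlinarith
  exact ⟨hα, hβ, hγ⟩

lemma key_deriv (Ξ : ℝ × ℝ × ℝ → ℝ) (Ξp : (ℝ × ℝ × ℝ) →L[ℝ] ℝ) (t r u v du dv e : ℝ)
    (hu : u ≠ 0) (hΞ : HasFDerivAt Ξ Ξp (t, r, v / u^2)) :
    HasDerivAt (fun s => (u + du*s)^2 * Ξ (t, r, (v + dv*s + e*s^2) / (u + du*s)^2))
      (2*u*du * Ξ (t, r, v/u^2) + (dv - 2*(v/u^2)*u*du) * Ξp (0,0,1)) 0 := by
  have hU : HasDerivAt (fun s : ℝ => u + du*s) du 0 := by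
    simpa using ((hasDerivAt_id (0:ℝ)).const_mul du).const_add u
  have hU2 : HasDerivAt (fun s : ℝ => (u + du*s)^2) (2*u*du) 0 := by
    have := hU.fun_pow 2
    simpa [mul_comm] using this
  have hV : HasDerivAt (fun s : ℝ => v + dv*s + e*s^2) dv 0 := by
    have h1 : HasDerivAt (fun s : ℝ => v + dv*s) dv 0 := by
      simpa using ((hasDerivAt_id (0:ℝ)).const_mul dv).const_add v
    have h2 : HasDerivAt (fun s : ℝ => e*s^2) 0 0 := by
      simpa using ((hasDerivAt_pow 2 (0:ℝ)).const_mul e)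
    simpa using h1.fun_add h2
  set Z' : ℝ := (dv * (u+du*0)^2 - (v+dv*0+e*0^2) * (2*u*du)) / ((u+du*0)^2)^2 with hZ'
  have hu2 : (u + du*0)^2 ≠ 0 := by simpa using pow_ne_zero 2 hu
  have hZ : HasDerivAt (fun s : ℝ => (v + dv*s + e*s^2) / (u + du*s)^2) Z' 0 :=
    hV.div hU2 hu2
  have hcurve : HasDerivAt (fun s : ℝ => ((t : ℝ), (r : ℝ),
      (v + dv*s + e*s^2) / (u + du*s)^2)) ((0 : ℝ), (0 : ℝ), Z') 0 :=
    (hasDerivAt_const (x := (0:ℝ)) (c := t)).prodMk ((hasDerivAt_const (x := (0:ℝ)) (c := r)).prodMk hZ)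
  have hpt : ((t : ℝ), (r : ℝ), (v + dv*0 + e*0^2) / (u + du*0)^2) = (t, r, v/u^2) := by
    norm_num
  have hΞ' : HasFDerivAt Ξ Ξp (t, r, (v + dv*0 + e*0^2) / (u + du*0)^2) := by
    rw [hpt]; exact hΞ
  have hcomp := hΞ'.comp_hasDerivAt 0 hcurve
  have hmul := hU2.fun_mul hcomp
  convert hmul using 1
  · rfl
  · rfl
  · rfl
  have hsm : ((0:ℝ), (0:ℝ), Z') = Z' • ((0:ℝ), (0:ℝ), (1:ℝ)) := by simp
  rw [hsm]
  simp only [Function.comp_apply, hpt, hsm, map_smul, smul_eq_mul, hZ']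
  have hu4 : u^2 ≠ 0 := pow_ne_zero 2 hu
  norm_num
  field_simp

lemma isOpen_OI {Ω : Set P2} {I : Set ℝ} (hΩ : IsOpen Ω) (hI : IsOpen I) :
    IsOpen (OI Ω I) := by
  have : OI Ω I = ((fun s : ℝ × ℝ × ℝ => (s.1, s.2.1)) ⁻¹' Ω) ∩
      ((fun s : ℝ × ℝ × ℝ => s.2.2) ⁻¹' I) := rfl
  rw [this]
  exact (hΩ.preimage (by fun_prop)).inter (hI.preimage (by fun_prop))

section Fiber

variable {Ω : Set P2} (hΩopen : IsOpen Ω) {k : ℕ → P2 → ℝ}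
  (hk : ∀ i, ContDiffOn ℝ (⊤ : ℕ∞) (k i) Ω) (hk10 : ∀ q ∈ Ω, k 10 q ≠ 0)
  {I : Set ℝ} (hIopen : IsOpen I)
  {Ξ : ℝ × ℝ × ℝ → ℝ} (hΞ : ContDiffOn ℝ (⊤ : ℕ∞) Ξ (OI Ω I))

include hΩopen hk hk10 hIopen hΞ in
lemma LXi_diff (p : P5) (hq : bp p ∈ Ω) (hu : uV k p ≠ 0) (hz : zV k p ∈ I) :
    DifferentiableAt ℝ (LXi k Ξ) p := by
  have hbp : DifferentiableAt ℝ (bp : P5 → P2) p := by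
    have : Differentiable ℝ (bp : P5 → P2) := by unfold bp; fun_prop
    exact this.differentiableAt
  have hki : ∀ i, DifferentiableAt ℝ (fun p' : P5 => k i (bp p')) p := fun i =>
    (((hk i).differentiableOn (by simp)).differentiableAt (hΩopen.mem_nhds hq)).comp p hbp
  have hk10' : k 10 (bp p) ≠ 0 := hk10 _ hq
  have hvT : DifferentiableAt ℝ (vT : P5 → ℝ) p := by
    have : Differentiable ℝ (vT : P5 → ℝ) := by unfold vT; fun_prop
    exact this.differentiableAt
  have hvR : DifferentiableAt ℝ (vR : P5 → ℝ) p := by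
    have : Differentiable ℝ (vR : P5 → ℝ) := by unfold vR; fun_prop
    exact this.differentiableAt
  have hvW : DifferentiableAt ℝ (vW : P5 → ℝ) p := by
    have : Differentiable ℝ (vW : P5 → ℝ) := by unfold vW; fun_prop
    exact this.differentiableAt
  have haa : DifferentiableAt ℝ (fun p' : P5 => aa k (bp p')) p := by
    simp only [aa, div_eq_mul_inv]
    exact (hki 7).mul ((hki 10).inv hk10')
  have hbb : DifferentiableAt ℝ (fun p' : P5 => bb k (bp p')) p := by
    simp only [bb, div_eq_mul_inv]
    exact (hki 8).mul ((hki 10).inv hk10')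
  have hcc : DifferentiableAt ℝ (fun p' : P5 => cc k (bp p')) p := by
    simp only [cc, div_eq_mul_inv]
    exact (((hki 9).mul (hki 10)).sub ((hki 7).mul (hki 8))).mul
      (((hki 10).pow 2).inv (pow_ne_zero 2 hk10'))
  have huV : DifferentiableAt ℝ (uV k) p := by
    unfold uV
    exact hvT.sub (haa.mul hvR)
  have hvV : DifferentiableAt ℝ (vV k) p := by
    unfold vV
    exact ((hcc.mul (hvR.pow 2)).add (((hbb.const_mul 2).mul hvT).mul hvR)).sub (hvW.pow 2)
  have hzV : DifferentiableAt ℝ (zV k) p := by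
    unfold zV
    simp only [div_eq_mul_inv]
    exact hvV.mul ((huV.pow 2).inv (pow_ne_zero 2 hu))
  have hΞd : DifferentiableAt ℝ Ξ (p.1, p.2.1, zV k p) :=
    ((hΞ.differentiableOn (by simp))).differentiableAt
      ((isOpen_OI hΩopen hIopen).mem_nhds ⟨hq, hz⟩)
  have hinner : DifferentiableAt ℝ (fun p' : P5 => (p'.1, p'.2.1, zV k p')) p := by
    apply DifferentiableAt.prodMk
    · fun_prop
    apply DifferentiableAt.prodMk
    · fun_prop
    · exact hzV
  exact DifferentiableAt.mul (huV.pow 2) (hΞd.comp p hinner)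

end Fiber

section Fiber2

variable {Ω : Set P2} (hΩopen : IsOpen Ω) {k : ℕ → P2 → ℝ}
  (hk : ∀ i, ContDiffOn ℝ (⊤ : ℕ∞) (k i) Ω) (hk10 : ∀ q ∈ Ω, k 10 q ≠ 0)
  {I : Set ℝ} (hIopen : IsOpen I)
  {Ξ : ℝ × ℝ × ℝ → ℝ} (hΞ : ContDiffOn ℝ (⊤ : ℕ∞) Ξ (OI Ω I))

include hΩopen hk hk10 hIopen hΞ in
lemma fiber_derivs (t r x y w : ℝ) (hq : ((t,r) : P2) ∈ Ω)
    (hu : x - aa k (t,r) * y ≠ 0)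
    (hz : (cc k (t,r) * y^2 + 2 * bb k (t,r) * x * y - w^2) / (x - aa k (t,r) * y)^2 ∈ I) :
    pTd (LXi k Ξ) (t,r,x,y,w)
        = 2 * (x - aa k (t,r) * y) * Ξ (t, r, (cc k (t,r) * y^2 + 2 * bb k (t,r) * x * y - w^2) / (x - aa k (t,r) * y)^2)
          + (2 * bb k (t,r) * y - 2 * ((cc k (t,r) * y^2 + 2 * bb k (t,r) * x * y - w^2) / (x - aa k (t,r) * y)^2) * (x - aa k (t,r) * y))
            * dZ3 Ξ (t, r, (cc k (t,r) * y^2 + 2 * bb k (t,r) * x * y - w^2) / (x - aa k (t,r) * y)^2) ∧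
    pRd (LXi k Ξ) (t,r,x,y,w)
        = 2 * (x - aa k (t,r) * y) * (-(aa k (t,r))) * Ξ (t, r, (cc k (t,r) * y^2 + 2 * bb k (t,r) * x * y - w^2) / (x - aa k (t,r) * y)^2)
          + (2 * cc k (t,r) * y + 2 * bb k (t,r) * x - 2 * ((cc k (t,r) * y^2 + 2 * bb k (t,r) * x * y - w^2) / (x - aa k (t,r) * y)^2) * (x - aa k (t,r) * y) * (-(aa k (t,r))))
            * dZ3 Ξ (t, r, (cc k (t,r) * y^2 + 2 * bb k (t,r) * x * y - w^2) / (x - aa k (t,r) * y)^2) ∧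
    pW (LXi k Ξ) (t,r,x,y,w)
        = (-(2*w)) * dZ3 Ξ (t, r, (cc k (t,r) * y^2 + 2 * bb k (t,r) * x * y - w^2) / (x - aa k (t,r) * y)^2) := by
  set a := aa k (t,r) with ha
  set b := bb k (t,r) with hb
  set c := cc k (t,r) with hc
  set u := x - a * y with hud
  set v := c * y^2 + 2*b*x*y - w^2 with hvd
  set p : P5 := (t,r,x,y,w) with hp
  have hbpp : bp p = (t,r) := rfl
  have huV : uV k p = u := rfl
  have hvV : vV k p = v := by
    show c * y^2 + 2*b*x*y - w^2 = v; rw [hvd]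
  have hzV : zV k p = v / u^2 := by
    show vV k p / (uV k p)^2 = _; rw [hvV, huV]
  have hune : uV k p ≠ 0 := by rw [huV]; exact hu
  have hzI : zV k p ∈ I := by rw [hzV]; exact hz
  have hd : DifferentiableAt ℝ (LXi k Ξ) p := LXi_diff hΩopen hk hk10 hIopen hΞ p hq hune hzI
  have hΞd : DifferentiableAt ℝ Ξ (t, r, v/u^2) :=
    ((hΞ.differentiableOn (by simp))).differentiableAt
      ((isOpen_OI hΩopen hIopen).mem_nhds ⟨hq, hz⟩)
  have hfd : HasFDerivAt Ξ (fderiv ℝ Ξ (t,r,v/u^2)) (t,r,v/u^2) := hΞd.hasFDerivAt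
  have hdZ : (fderiv ℝ Ξ (t,r,v/u^2)) (0,0,1) = dZ3 Ξ (t,r,v/u^2) := rfl
  refine ⟨?_, ?_, ?_⟩
  · -- pTd
    have hL : HasLineDerivAt ℝ (LXi k Ξ)
        (2*u*1 * Ξ (t, r, v/u^2) + (2*b*y - 2*(v/u^2)*u*1) * (fderiv ℝ Ξ (t,r,v/u^2)) (0,0,1))
        p ((0:ℝ),(0:ℝ),(1:ℝ),(0:ℝ),(0:ℝ)) := by
      show HasDerivAt (fun s : ℝ => LXi k Ξ (p + s • ((0:ℝ),(0:ℝ),(1:ℝ),(0:ℝ),(0:ℝ)))) _ 0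
      have heq : (fun s : ℝ => LXi k Ξ (p + s • ((0:ℝ),(0:ℝ),(1:ℝ),(0:ℝ),(0:ℝ))))
          = fun s => (u + 1*s)^2 * Ξ (t, r, (v + (2*b*y)*s + 0*s^2)/(u + 1*s)^2) := by
        funext s
        have hpt : p + s • (((0:ℝ),(0:ℝ),(1:ℝ),(0:ℝ),(0:ℝ)) : P5) = ((t,r,x+s,y,w) : P5) := by
          rw [hp]; simp [Prod.ext_iff]
        rw [hpt]
        show (uV k (t,r,x+s,y,w))^2 * Ξ (t, r, zV k (t,r,x+s,y,w)) = _
        have h1 : uV k ((t,r,x+s,y,w) : P5) = u + 1*s := by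
          show (x+s) - aa k (t,r) * y = _; rw [hud, ← ha]; ring
        have h2 : zV k ((t,r,x+s,y,w) : P5) = (v + (2*b*y)*s + 0*s^2)/(u + 1*s)^2 := by
          show (cc k (t,r) * y^2 + 2 * bb k (t,r) * (x+s) * y - w^2) / (uV k ((t,r,x+s,y,w) : P5))^2 = _
          rw [h1, ← hc, ← hb]
          congr 1
          rw [hvd]; ring
        rw [h1, h2]
      rw [heq]
      exact key_deriv Ξ _ t r u v 1 (2*b*y) 0 hu hfd
    have := hd.lineDeriv_eq_fderiv (v := (((0:ℝ),(0:ℝ),(1:ℝ),(0:ℝ),(0:ℝ)) : P5))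
    have h2 := hL.lineDeriv
    show fderiv ℝ (LXi k Ξ) p ((0:ℝ),(0:ℝ),(1:ℝ),(0:ℝ),(0:ℝ)) = _
    rw [← this, h2, hdZ]
    try ring
  · -- pRd
    have hL : HasLineDerivAt ℝ (LXi k Ξ)
        (2*u*(-a) * Ξ (t, r, v/u^2) + ((2*c*y + 2*b*x) - 2*(v/u^2)*u*(-a)) * (fderiv ℝ Ξ (t,r,v/u^2)) (0,0,1))
        p ((0:ℝ),(0:ℝ),(0:ℝ),(1:ℝ),(0:ℝ)) := by
      show HasDerivAt (fun s : ℝ => LXi k Ξ (p + s • ((0:ℝ),(0:ℝ),(0:ℝ),(1:ℝ),(0:ℝ)))) _ 0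
      have heq : (fun s : ℝ => LXi k Ξ (p + s • ((0:ℝ),(0:ℝ),(0:ℝ),(1:ℝ),(0:ℝ))))
          = fun s => (u + (-a)*s)^2 * Ξ (t, r, (v + (2*c*y+2*b*x)*s + c*s^2)/(u + (-a)*s)^2) := by
        funext s
        have hpt : p + s • (((0:ℝ),(0:ℝ),(0:ℝ),(1:ℝ),(0:ℝ)) : P5) = ((t,r,x,y+s,w) : P5) := by
          rw [hp]; simp [Prod.ext_iff]
        rw [hpt]
        show (uV k (t,r,x,y+s,w))^2 * Ξ (t, r, zV k (t,r,x,y+s,w)) = _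
        have h1 : uV k ((t,r,x,y+s,w) : P5) = u + (-a)*s := by
          show x - aa k (t,r) * (y+s) = _; rw [hud, ← ha]; ring
        have h2 : zV k ((t,r,x,y+s,w) : P5) = (v + (2*c*y+2*b*x)*s + c*s^2)/(u + (-a)*s)^2 := by
          show (cc k (t,r) * (y+s)^2 + 2 * bb k (t,r) * x * (y+s) - w^2) / (uV k ((t,r,x,y+s,w) : P5))^2 = _
          rw [h1, ← hc, ← hb]
          congr 1
          rw [hvd]; ring
        rw [h1, h2]
      rw [heq]
      exact key_deriv Ξ _ t r u v (-a) (2*c*y+2*b*x) c hu hfd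
    have := hd.lineDeriv_eq_fderiv (v := (((0:ℝ),(0:ℝ),(0:ℝ),(1:ℝ),(0:ℝ)) : P5))
    have h2 := hL.lineDeriv
    show fderiv ℝ (LXi k Ξ) p ((0:ℝ),(0:ℝ),(0:ℝ),(1:ℝ),(0:ℝ)) = _
    rw [← this, h2, hdZ]
    try ring
  · -- pW
    have hL : HasLineDerivAt ℝ (LXi k Ξ)
        (2*u*0 * Ξ (t, r, v/u^2) + ((-(2*w)) - 2*(v/u^2)*u*0) * (fderiv ℝ Ξ (t,r,v/u^2)) (0,0,1))
        p ((0:ℝ),(0:ℝ),(0:ℝ),(0:ℝ),(1:ℝ)) := by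
      show HasDerivAt (fun s : ℝ => LXi k Ξ (p + s • ((0:ℝ),(0:ℝ),(0:ℝ),(0:ℝ),(1:ℝ)))) _ 0
      have heq : (fun s : ℝ => LXi k Ξ (p + s • ((0:ℝ),(0:ℝ),(0:ℝ),(0:ℝ),(1:ℝ))))
          = fun s => (u + 0*s)^2 * Ξ (t, r, (v + (-(2*w))*s + (-1)*s^2)/(u + 0*s)^2) := by
        funext s
        have hpt : p + s • (((0:ℝ),(0:ℝ),(0:ℝ),(0:ℝ),(1:ℝ)) : P5) = ((t,r,x,y,w+s) : P5) := by
          rw [hp]; simp [Prod.ext_iff]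
        rw [hpt]
        show (uV k (t,r,x,y,w+s))^2 * Ξ (t, r, zV k (t,r,x,y,w+s)) = _
        have h1 : uV k ((t,r,x,y,w+s) : P5) = u + 0*s := by
          show x - aa k (t,r) * y = _; rw [hud, ← ha]; ring
        have h2 : zV k ((t,r,x,y,w+s) : P5) = (v + (-(2*w))*s + (-1)*s^2)/(u + 0*s)^2 := by
          show (cc k (t,r) * y^2 + 2 * bb k (t,r) * x * y - (w+s)^2) / (uV k ((t,r,x,y,w+s) : P5))^2 = _
          rw [h1, ← hc, ← hb]
          congr 1
          rw [hvd]; ring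
        rw [h1, h2]
      rw [heq]
      exact key_deriv Ξ _ t r u v 0 (-(2*w)) (-1) hu hfd
    have := hd.lineDeriv_eq_fderiv (v := (((0:ℝ),(0:ℝ),(0:ℝ),(0:ℝ),(1:ℝ)) : P5))
    have h2 := hL.lineDeriv
    show fderiv ℝ (LXi k Ξ) p ((0:ℝ),(0:ℝ),(0:ℝ),(0:ℝ),(1:ℝ)) = _
    rw [← this, h2, hdZ]
    try ring

end Fiber2

lemma main_ids (Ω : Set P2) (hΩopen : IsOpen Ω)
    (k : ℕ → P2 → ℝ) (hk : ∀ i, ContDiffOn ℝ (⊤ : ℕ∞) (k i) Ω)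
    (hk10 : ∀ q ∈ Ω, k 10 q ≠ 0)
    (I : Set ℝ) (hIopen : IsOpen I)
    (Ξ : ℝ × ℝ × ℝ → ℝ) (hΞ : ContDiffOn ℝ (⊤ : ℕ∞) Ξ (OI Ω I))
    (hS : ∀ q ∈ Ω, ∀ z0 ∈ I, (Sset k q z0).Nonempty)
    (hbracket : ∀ p : P5, bp p ∈ Ω → 0 < uV k p → 0 < vW p → zV k p ∈ I →
      (a1 k (bp p) * vT p + a2 k (bp p) * vR p) * pTd (LXi k Ξ) p
        + (a3 k (bp p) * vT p + a4 k (bp p) * vR p) * pRd (LXi k Ξ) p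
        + a5 k (bp p) * vW p * pW (LXi k Ξ) p = 0)
    (q : P2) (hq : q ∈ Ω) (z₀ : ℝ) (hz₀ : z₀ ∈ I) :
    Ac k q * dZ3 Ξ (q.1, q.2, z₀) = 0 ∧
    (Dc k q * z₀ + Ec k q) * dZ3 Ξ (q.1, q.2, z₀) = Fc k q * Ξ (q.1, q.2, z₀) ∧
    Bc k q * (z₀ * dZ3 Ξ (q.1, q.2, z₀) - Ξ (q.1, q.2, z₀)) + Cc k q * dZ3 Ξ (q.1, q.2, z₀) = 0 := by
  obtain ⟨t, r⟩ := q
  simp only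
  set a := aa k (t,r) with ha
  set b := bb k (t,r) with hb
  set c := cc k (t,r) with hc
  set Ξ₀ := Ξ (t, r, z₀) with hΞ₀
  set Ξz := dZ3 Ξ (t, r, z₀) with hΞz
  -- open nonempty S gives a box
  obtain ⟨⟨x₀, y₀⟩, hxy₀⟩ := hS (t,r) hq z₀ hz₀
  have hSopen : IsOpen (Sset k (t,r) z₀) := by
    have : Sset k (t,r) z₀ = {v : ℝ × ℝ | 0 < v.1 - aa k (t,r) * v.2} ∩
        {v : ℝ × ℝ | 0 < cc k (t,r) * v.2^2 + 2 * bb k (t,r) * v.1 * v.2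
          - z₀ * (v.1 - aa k (t,r) * v.2)^2} := rfl
    rw [this]
    exact (isOpen_lt continuous_const (by fun_prop)).inter
      (isOpen_lt continuous_const (by fun_prop))
  obtain ⟨ε, hε, hball⟩ := Metric.isOpen_iff.1 hSopen _ hxy₀
  -- the quadratic identity on the box
  have Hxy : ∀ x y : ℝ, |x - x₀| < ε → |y - y₀| < ε →
      (2*((Dc k (t,r)*z₀+Ec k (t,r))*Ξz - Fc k (t,r)*Ξ₀)) * x^2
      + (2*((Cc k (t,r)+z₀*Bc k (t,r))*Ξz - Bc k (t,r)*Ξ₀)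
          - 2*a*(2*((Dc k (t,r)*z₀+Ec k (t,r))*Ξz - Fc k (t,r)*Ξ₀))) * x * y
      + (2*Ac k (t,r)*Ξz - a*(2*((Cc k (t,r)+z₀*Bc k (t,r))*Ξz - Bc k (t,r)*Ξ₀))
          + a^2*(2*((Dc k (t,r)*z₀+Ec k (t,r))*Ξz - Fc k (t,r)*Ξ₀))) * y^2 = 0 := by
    intro x y hx hy
    have hmem : ((x,y) : ℝ × ℝ) ∈ Sset k (t,r) z₀ := by
      apply hball
      rw [Metric.mem_ball, Prod.dist_eq]
      simp only [Real.dist_eq]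
      exact max_lt hx hy
    obtain ⟨hu, hw2⟩ := hmem
    simp only [Set.mem_setOf_eq] at hu hw2
    set u := x - a * y with hud
    have hune : u ≠ 0 := ne_of_gt hu
    set w := Real.sqrt (c * y^2 + 2*b*x*y - z₀*u^2) with hwd
    have hwpos : 0 < w := Real.sqrt_pos.2 hw2
    have hwsq : w^2 = c * y^2 + 2*b*x*y - z₀*u^2 := Real.sq_sqrt (le_of_lt hw2)
    have hzq : (c * y^2 + 2 * b * x * y - w^2) / u^2 = z₀ := by
      rw [hwsq]; field_simp; ring
    have hzmem : (cc k (t,r) * y^2 + 2 * bb k (t,r) * x * y - w^2) / (x - aa k (t,r) * y)^2 ∈ I := by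
      rw [← hc, ← hb, ← ha, ← hud, hzq]; exact hz₀
    obtain ⟨hTd, hRd, hWd⟩ := fiber_derivs hΩopen hk hk10 hIopen hΞ t r x y w hq
      (by rw [← ha, ← hud]; exact hune) hzmem
    rw [← ha, ← hb, ← hc, ← hud, hzq] at hTd hRd hWd
    have H := hbracket (t,r,x,y,w) hq (by show 0 < uV k _; rw [show uV k ((t,r,x,y,w) : P5) = u from rfl]; exact hu)
      hwpos (by rw [show zV k ((t,r,x,y,w) : P5) = (c * y^2 + 2*b*x*y - w^2)/u^2 from rfl, hzq]; exact hz₀)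
    rw [show bp ((t,r,x,y,w) : P5) = (t,r) from rfl, show vT ((t,r,x,y,w) : P5) = x from rfl,
      show vR ((t,r,x,y,w) : P5) = y from rfl, show vW ((t,r,x,y,w) : P5) = w from rfl,
      hTd, hRd, hWd] at H
    rw [← hΞ₀, ← hΞz] at H
    simp only [Ac, Bc, Cc, Dc, Ec, Fc, ← ha, ← hb, ← hc]
    linear_combination H + 2 * a5 k (t,r) * Ξz * hwsq
  obtain ⟨hc1, hc2, hc3⟩ := quad2_zero hε Hxy
  refine ⟨?_, ?_, ?_⟩
  · linear_combination (hc3 + a*hc2 + a^2*hc1)/2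
  · linear_combination hc1/2
  · linear_combination (hc2 + 2*a*hc1)/2

open Topology Filter

/-- If `L = u²Ξ(t,r,z)` (with `∂_zΞ ≠ 0`) satisfies the bracket constraint
`[δ_t,δ_r]L = 0`, then `A = 0` on `Ω`, and over each point either `Ξ` is affine in `z`
(pseudo-Riemannian case) or `B = C = 0` and `(Dz+E)∂_zΞ = FΞ` on `I`. -/
theorem stmt10 (Ω : Set P2) (hΩopen : IsOpen Ω) (hΩne : Ω.Nonempty)
    (k : ℕ → P2 → ℝ) (hk : ∀ i, ContDiffOn ℝ (⊤ : ℕ∞) (k i) Ω)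
    (hk10 : ∀ q ∈ Ω, k 10 q ≠ 0)
    (I : Set ℝ) (hIopen : IsOpen I) (hIne : I.Nonempty) (hIconn : I.OrdConnected)
    (Ξ : ℝ × ℝ × ℝ → ℝ) (hΞ : ContDiffOn ℝ (⊤ : ℕ∞) Ξ (OI Ω I))
    (hΞz : ∀ s ∈ OI Ω I, dZ3 Ξ s ≠ 0)
    (hS : ∀ q ∈ Ω, ∀ z0 ∈ I, (Sset k q z0).Nonempty)
    (hbracket : ∀ p : P5, bp p ∈ Ω → 0 < uV k p → 0 < vW p → zV k p ∈ I →
      (a1 k (bp p) * vT p + a2 k (bp p) * vR p) * pTd (LXi k Ξ) p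
        + (a3 k (bp p) * vT p + a4 k (bp p) * vR p) * pRd (LXi k Ξ) p
        + a5 k (bp p) * vW p * pW (LXi k Ξ) p = 0) :
    (∀ q ∈ Ω, Ac k q = 0) ∧
      ∀ q ∈ Ω,
        (∃ α β : ℝ, ∀ z ∈ I, Ξ (q.1, q.2, z) = α * z + β) ∨
        (Bc k q = 0 ∧ Cc k q = 0 ∧
          ∀ z ∈ I, (Dc k q * z + Ec k q) * dZ3 Ξ (q.1, q.2, z) = Fc k q * Ξ (q.1, q.2, z)) := by
  obtain ⟨zc, hzc⟩ := hIne
  have main := fun q hq z hz => main_ids Ω hΩopen k hk hk10 I hIopen Ξ hΞ hS hbracket q hq z hz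
  have hΞz' : ∀ q ∈ Ω, ∀ z ∈ I, dZ3 Ξ (q.1, q.2, z) ≠ 0 := by
    intro q hq z hz
    exact hΞz (q.1, q.2, z) ⟨hq, hz⟩
  constructor
  · intro q hq
    have h := (main q hq zc hzc).1
    exact (mul_eq_zero.1 h).resolve_right (hΞz' q hq zc hzc)
  intro q hq
  by_cases hB : Bc k q = 0
  · right
    refine ⟨hB, ?_, fun z hz => (main q hq z hz).2.1⟩
    have h := (main q hq zc hzc).2.2
    rw [hB] at h
    simpa using (mul_eq_zero.1 (by linarith [h] : Cc k q * dZ3 Ξ (q.1, q.2, zc) = 0)).resolve_right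
      (hΞz' q hq zc hzc)
  · left
    set B := Bc k q with hBdef
    set C := Cc k q with hCdef
    set g : ℝ → ℝ := fun z => Ξ (q.1, q.2, z) with hgdef
    -- smoothness of g on I
    have hι : ContDiff ℝ (⊤ : ℕ∞) (fun z : ℝ => ((q.1 : ℝ), (q.2 : ℝ), z)) := by fun_prop
    have hmaps : Set.MapsTo (fun z : ℝ => ((q.1 : ℝ), (q.2 : ℝ), z)) I (OI Ω I) :=
      fun z hz => ⟨hq, hz⟩
    have hg : ContDiffOn ℝ (⊤ : ℕ∞) g I := hΞ.comp hι.contDiffOn hmaps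
    have hgd : ∀ z ∈ I, HasDerivAt g (dZ3 Ξ (q.1, q.2, z)) z := by
      intro z hz
      have hΞd : DifferentiableAt ℝ Ξ (q.1, q.2, z) :=
        (hΞ.differentiableOn (by simp)).differentiableAt
          ((isOpen_OI hΩopen hIopen).mem_nhds ⟨hq, hz⟩)
      have hcur : HasDerivAt (fun z : ℝ => ((q.1 : ℝ), (q.2 : ℝ), z))
          (((0:ℝ), (0:ℝ), (1:ℝ))) z :=
        (hasDerivAt_const (x := z) (c := q.1)).prodMk ((hasDerivAt_const (x := z) (c := q.2)).prodMk (hasDerivAt_id z))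
      exact hΞd.hasFDerivAt.comp_hasDerivAt z hcur
    have hder : ∀ z ∈ I, deriv g z = dZ3 Ξ (q.1, q.2, z) := fun z hz => (hgd z hz).deriv
    have hg' : ContDiffOn ℝ (⊤ : ℕ∞) (deriv g) I := hg.deriv_of_isOpen hIopen (by simp)
    have hgd2 : ∀ z ∈ I, HasDerivAt (deriv g) (deriv (deriv g) z) z := fun z hz =>
      ((hg'.differentiableOn (by simp)).differentiableAt (hIopen.mem_nhds hz)).hasDerivAt
    have hcont2 : ContinuousOn (deriv (deriv g)) I :=
      ((hg'.deriv_of_isOpen hIopen (by simp) : ContDiffOn ℝ (⊤ : ℕ∞) (deriv (deriv g)) I)).continuousOn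
    -- the ODE identity
    have hid : ∀ z ∈ I, (B * z + C) * deriv g z - B * g z = 0 := by
      intro z hz
      have h3 := (main q hq z hz).2.2
      rw [hder z hz]
      linear_combination h3
    -- derivative of the identity
    have hzero2 : ∀ z ∈ I, (B * z + C) * deriv (deriv g) z = 0 := by
      intro z hz
      have h1 : HasDerivAt (fun z : ℝ => B * z + C) B z := by
        simpa using ((hasDerivAt_id z).const_mul B).add_const C
      have hgz : HasDerivAt g (deriv g z) z := by
        rw [hder z hz]; exact hgd z hz
      have hprod : HasDerivAt (fun z => (B * z + C) * deriv g z - B * g z)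
          (B * deriv g z + (B * z + C) * deriv (deriv g) z - B * deriv g z) z :=
        (h1.mul (hgd2 z hz)).sub (hgz.const_mul B)
      have hEq : HasDerivAt (fun z => (B * z + C) * deriv g z - B * g z) 0 z := by
        apply HasDerivAt.congr_of_eventuallyEq (hasDerivAt_const z (0:ℝ))
        filter_upwards [hIopen.mem_nhds hz] with z' hz'
        exact hid z' hz'
      have := hEq.unique hprod
      linarith [this]
    -- second derivative vanishes on I
    have hgpp : ∀ z ∈ I, deriv (deriv g) z = 0 := by
      intro z hz
      by_cases hbz : B * z + C = 0
      · -- z = -C/B ; use continuity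
        have hne : ∀ z' ∈ I, z' ≠ z → deriv (deriv g) z' = 0 := by
          intro z' hz' hzz
          refine (mul_eq_zero.1 (hzero2 z' hz')).resolve_left ?_
          intro h0
          apply hzz
          have : B * z' = B * z := by linarith [hbz, h0]
          exact mul_left_cancel₀ hB this
        have hIz : I ∈ 𝓝 z := hIopen.mem_nhds hz
        have hsub : 𝓝[I ∩ {z}ᶜ] z = 𝓝[{z}ᶜ] z :=
          nhdsWithin_inter_of_mem (mem_nhdsWithin_of_mem_nhds hIz)
        have ht1 : Filter.Tendsto (deriv (deriv g)) (𝓝[I ∩ {z}ᶜ] z) (𝓝 (deriv (deriv g) z)) :=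
          ((hcont2 z hz).mono Set.inter_subset_left).tendsto
        have ht2 : Filter.Tendsto (deriv (deriv g)) (𝓝[I ∩ {z}ᶜ] z) (𝓝 0) := by
          apply Filter.Tendsto.congr' _ tendsto_const_nhds
          filter_upwards [self_mem_nhdsWithin] with z' hz'
          exact (hne z' hz'.1 hz'.2).symm
        rw [hsub] at ht1 ht2
        exact tendsto_nhds_unique ht1 ht2
      · exact (mul_eq_zero.1 (hzero2 z hz)).resolve_left hbz
    -- deriv g is constant on I
    have hconvex : Convex ℝ I := convex_iff_ordConnected.2 hIconn
    have hg'diff : DifferentiableOn ℝ (deriv g) I := hg'.differentiableOn (by simp)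
    have hfzero : ∀ z ∈ I, fderivWithin ℝ (deriv g) I z = 0 := by
      intro z hz
      rw [fderivWithin_of_isOpen hIopen hz]
      have hd := hgd2 z hz
      rw [hgpp z hz] at hd
      rw [hd.hasFDerivAt.fderiv]
      ext w
      simp
    set α := deriv g zc with hα
    have hconst : ∀ z ∈ I, deriv g z = α := fun z hz =>
      hconvex.is_const_of_fderivWithin_eq_zero hg'diff hfzero hz hzc
    have hg2diff : DifferentiableOn ℝ (fun z => g z - α * z) I :=
      (hg.differentiableOn (by simp)).sub ((differentiable_id.const_mul α).differentiableOn)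
    have hfzero2 : ∀ z ∈ I, fderivWithin ℝ (fun z => g z - α * z) I z = 0 := by
      intro z hz
      rw [fderivWithin_of_isOpen hIopen hz]
      have hgz : HasDerivAt g (deriv g z) z :=
        ((hg.differentiableOn (by simp)).differentiableAt (hIopen.mem_nhds hz)).hasDerivAt
      have hd : HasDerivAt (fun z => g z - α * z) (deriv g z - α) z := by
        simpa using hgz.fun_sub ((hasDerivAt_id z).const_mul α)
      rw [hconst z hz, sub_self] at hd
      rw [hd.hasFDerivAt.fderiv]
      ext w
      simp
    refine ⟨α, g zc - α * zc, ?_⟩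
    intro z hz
    have hcst := hconvex.is_const_of_fderivWithin_eq_zero hg2diff hfzero2 hz hzc
    show g z = α * z + (g zc - α * zc)
    linarith [hcst]
end
end

section
/- Let k₇,k₈,k₉,k₁₀ ∈ ℝ with k₁₀ ≠ 0 and (k₈,k₉) ≠ (0,0), and set a = k₇/k₁₀, b = k₈/k₁₀, c = (k₉k₁₀ − k₇k₈)/k₁₀². Let a₁,…,a₅ ∈ ℝ with a₅ ≠ 0 and let A₁,…,A₅ ∈ ℝ. Define A = b(aa₁+a₂) + (ab+c)(aa₃+a₄) − a₅(2ab+c), B = a(aa₃+a₄) − (aa₁+a₂), C = (ab+c)a₃ + b(aa₃+a₄) + b(a₁−2a₅), D = aa₃ − a₁ + a₅, E = ba₃, F = aa₃ − a₁, and define 𝒜 = b(aA₁+A₂) + (ab+c)(aA₃+A₄) − A₅(2ab+c), ℬ = a(aA₃+A₄) − (aA₁+A₂), 𝒞 = (ab+c)A₃ + b(aA₃+A₄) + b(A₁−2A₅), 𝒟 = aA₃ − A₁ + A₅, ℰ = bA₃, ℱ = aA₃ − A₁. Assume A = B = C = 0. Then, for any α ∈ ℝ, the conditions 𝒜 = ℬ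 = 𝒞 = 0, 𝒟 = αD, ℰ = αE and ℱ = αF hold simultaneously if and only if Aᵢ = α·aᵢ for every i = 1,…,5. -/
noncomputable section

/-- pointwise algebraic form of Lemma 4 of the paper.
Assuming `A = B = C = 0`, `a₅ ≠ 0` and `(k₈,k₉) ≠ (0,0)`, the conditions
`𝒜 = ℬ = 𝒞 = 0`, `𝒟 = αD`, `ℰ = αE`, `ℱ = αF` hold iff `Aᵢ = α·aᵢ` for `i = 1,…,5`. -/
theorem stmt12 (k7 k8 k9 k10 : ℝ) (hk10 : k10 ≠ 0) (hk89 : (k8, k9) ≠ (0, 0))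
    (a1 a2 a3 a4 a5 : ℝ) (ha5 : a5 ≠ 0) (A1 A2 A3 A4 A5 : ℝ)
    (a b c : ℝ)
    (ha : a = k7 / k10) (hb : b = k8 / k10) (hc : c = (k9 * k10 - k7 * k8) / k10 ^ 2)
    (A B C D E F cA cB cC cD cE cF : ℝ)
    (hA : A = b * (a * a1 + a2) + (a * b + c) * (a * a3 + a4) - a5 * (2 * a * b + c))
    (hB : B = a * (a * a3 + a4) - (a * a1 + a2))
    (hC : C = (a * b + c) * a3 + b * (a * a3 + a4) + b * (a1 - 2 * a5))
    (hD : D = a * a3 - a1 + a5) (hE : E = b * a3) (hF : F = a * a3 - a1)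
    (hcA : cA = b * (a * A1 + A2) + (a * b + c) * (a * A3 + A4) - A5 * (2 * a * b + c))
    (hcB : cB = a * (a * A3 + A4) - (a * A1 + A2))
    (hcC : cC = (a * b + c) * A3 + b * (a * A3 + A4) + b * (A1 - 2 * A5))
    (hcD : cD = a * A3 - A1 + A5) (hcE : cE = b * A3) (hcF : cF = a * A3 - A1)
    (hABC : A = 0 ∧ B = 0 ∧ C = 0) :
    ∀ α : ℝ,
      (cA = 0 ∧ cB = 0 ∧ cC = 0 ∧ cD = α * D ∧ cE = α * E ∧ cF = α * F) ↔
      (A1 = α * a1 ∧ A2 = α * a2 ∧ A3 = α * a3 ∧ A4 = α * a4 ∧ A5 = α * a5) := by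
  subst hA hB hC hD hE hF hcA hcB hcC hcD hcE hcF
  obtain ⟨hA0, hB0, hC0⟩ := hABC
  intro α
  constructor
  · rintro ⟨h1, h2, h3, h4, h5, h6⟩
    have hB5 : A5 = α * a5 := by linear_combination h4 - h6
    rcases eq_or_ne b 0 with hb0 | hb0
    · subst hb0
      have hk8 : k8 = 0 := by
        field_simp at hb; linarith [hb]
      have hk9 : k9 ≠ 0 := by
        intro h; exact hk89 (by simp [hk8, h])
      have hc0 : c ≠ 0 := by
        rw [hc, hk8]
        exact div_ne_zero (by simpa using mul_ne_zero hk9 hk10) (pow_ne_zero 2 hk10)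
      have h3' : A3 = α * a3 := mul_left_cancel₀ hc0 (by linear_combination h3 - α * hC0)
      have h1' : A1 = α * a1 := by linear_combination a * h3' - h6
      have h4' : A4 = α * a4 := mul_left_cancel₀ hc0 (by
        linear_combination h1 - α * hA0 - c * a * h3' + c * hB5)
      have h2' : A2 = α * a2 := by
        linear_combination a * a * h3' + a * h4' - a * h1' - h2 + α * hB0
      exact ⟨h1', h2', h3', h4', hB5⟩
    · have h3' : A3 = α * a3 := mul_left_cancel₀ hb0 (by linear_combination h5)
      have h1' : A1 = α * a1 := by linear_combination a * h3' - h6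
      have h4' : A4 = α * a4 := mul_left_cancel₀ hb0 (by
        linear_combination h3 - α * hC0 - (2 * a * b + c) * h3' - b * h1' + 2 * b * hB5)
      have h2' : A2 = α * a2 := by
        linear_combination a * a * h3' + a * h4' - a * h1' - h2 + α * hB0
      exact ⟨h1', h2', h3', h4', hB5⟩
  · rintro ⟨h1, h2, h3, h4, h5⟩
    subst h1 h2 h3 h4 h5
    refine ⟨by linear_combination α * hA0, by linear_combination α * hB0,
      by linear_combination α * hC0, by ring, by ring, by ring⟩
end
end

section
/- Assume k₁₀ ≠ 0 on Ω and that the curvature relations a₆ = a·a₇, a₈ = b·a₇, a₉ = (ab+c)·a₇, a₁₀ = a·a₁₁, a₁₂ = b·a₁₁, a₁₃ = (ab+c)·a₁₁ hold on Ω. Set M = 2(k₁ − k₄a), M̃ = M − 2k₈, N = 2(k₂ − k₆a), Ñ = N − 2k₉. Let I ⊆ ℝ be a nonempty open interval with S(t,r,z₀) ≠ ∅ for all (t,r) ∈ Ω and z₀ ∈ I, and let Ξ : Ω × I → ℝ be smooth. Then the Lagrangian L := u²·Ξ(t,r,z) satisfies δ_tL = 0 and δ_rL = 0 at all points (t,r,ṫ,ṙ,w)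 with u > 0, w > 0 and z ∈ I if and only if ∂_tΞ = M·Ξ − (M̃z − 2k₄b)·∂_zΞ and ∂_rΞ = N·Ξ − (Ñz − 2k₆b)·∂_zΞ hold at every point of Ω × I. -/
noncomputable section
open Real Set

theorem hasFDerivAt_div' {E : Type*} [NormedAddCommGroup E] [NormedSpace ℝ E]
    {f g : E → ℝ} {f' g' : E →L[ℝ] ℝ} {x : E}
    (hf : HasFDerivAt f f' x) (hg : HasFDerivAt g g' x) (hx : g x ≠ 0) :
    HasFDerivAt (fun y => f y / g y) ((g x ^ 2)⁻¹ • (g x • f' - f x • g')) x := by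
  have hinv : HasFDerivAt (fun y => (g y)⁻¹)
      ((ContinuousLinearMap.smulRight (1 : ℝ →L[ℝ] ℝ) (-(g x ^ 2)⁻¹)).comp g') x :=
    (hasFDerivAt_inv hx).comp x hg
  have h := hf.mul hinv
  simp only [div_eq_mul_inv]
  refine h.congr_fderiv ?_
  ext y
  simp only [ContinuousLinearMap.smul_apply, ContinuousLinearMap.sub_apply,
    ContinuousLinearMap.add_apply, ContinuousLinearMap.comp_apply,
    ContinuousLinearMap.smulRight_apply, ContinuousLinearMap.one_apply, smul_eq_mul]
  field_simp
  ring

theorem hasFDerivAt_sq {E : Type*} [NormedAddCommGroup E] [NormedSpace ℝ E]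
    {f : E → ℝ} {f' : E →L[ℝ] ℝ} {x : E} (hf : HasFDerivAt f f' x) :
    HasFDerivAt (fun y => f y ^ 2) ((2 * f x) • f') x := by
  have h := hf.mul hf
  have h2 : (f * f) = fun y => f y ^ 2 := by ext y; simp only [Pi.mul_apply]; ring
  rw [h2] at h
  refine h.congr_fderiv ?_
  ext y
  simp only [ContinuousLinearMap.smul_apply, ContinuousLinearMap.add_apply, smul_eq_mul]
  ring
lemma fderiv2_eval (f : P2 → ℝ) (q : P2) (x y : ℝ) :
    fderiv ℝ f q (x, y) = x * dt2 f q + y * dr2 f q := by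
  have h : (x, y) = x • ((1:ℝ), (0:ℝ)) + y • ((0:ℝ), (1:ℝ)) := by simp
  rw [h, map_add, map_smul, map_smul]; rfl

lemma fderiv3_eval (f : ℝ × ℝ × ℝ → ℝ) (s : ℝ × ℝ × ℝ) (x y z : ℝ) :
    fderiv ℝ f s (x, y, z) = x * dT3 f s + y * dR3 f s + z * dZ3 f s := by
  have h : (x, y, z) = x • ((1:ℝ), (0:ℝ), (0:ℝ)) + y • ((0:ℝ), (1:ℝ), (0:ℝ))
      + z • ((0:ℝ), (0:ℝ), (1:ℝ)) := by simp
  rw [h, map_add, map_add, map_smul, map_smul, map_smul]; rfl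

set_option maxHeartbeats 2000000 in
lemma key (k : ℕ → P2 → ℝ) (Ξ : ℝ × ℝ × ℝ → ℝ) (p : P5)
    (h7 : DifferentiableAt ℝ (k 7) (bp p)) (h8 : DifferentiableAt ℝ (k 8) (bp p))
    (h9 : DifferentiableAt ℝ (k 9) (bp p)) (h10 : DifferentiableAt ℝ (k 10) (bp p))
    (hk10 : k 10 (bp p) ≠ 0) (hu : uV k p ≠ 0)
    (hΞd : DifferentiableAt ℝ Ξ (p.1, p.2.1, zV k p))
    (e1 : a6 k (bp p) = aa k (bp p) * a7 k (bp p))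
    (e2 : a8 k (bp p) = bb k (bp p) * a7 k (bp p))
    (e3 : a9 k (bp p) = (aa k (bp p) * bb k (bp p) + cc k (bp p)) * a7 k (bp p))
    (e4 : a10 k (bp p) = aa k (bp p) * a11 k (bp p))
    (e5 : a12 k (bp p) = bb k (bp p) * a11 k (bp p))
    (e6 : a13 k (bp p) = (aa k (bp p) * bb k (bp p) + cc k (bp p)) * a11 k (bp p)) :
    delT k (LXi k Ξ) p = (uV k p)^2 * (dT3 Ξ (p.1, p.2.1, zV k p)
        - Mc k (bp p) * Ξ (p.1, p.2.1, zV k p)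
        + (Mtc k (bp p) * zV k p - 2 * k 4 (bp p) * bb k (bp p)) * dZ3 Ξ (p.1, p.2.1, zV k p))
    ∧ delR k (LXi k Ξ) p = (uV k p)^2 * (dR3 Ξ (p.1, p.2.1, zV k p)
        - Nc k (bp p) * Ξ (p.1, p.2.1, zV k p)
        + (Ntc k (bp p) * zV k p - 2 * k 6 (bp p) * bb k (bp p)) * dZ3 Ξ (p.1, p.2.1, zV k p)) := by
  have hbp : HasFDerivAt bp
      ((ContinuousLinearMap.fst ℝ ℝ (ℝ×ℝ×ℝ×ℝ)).prod
        ((ContinuousLinearMap.fst ℝ ℝ (ℝ×ℝ×ℝ)).comp (ContinuousLinearMap.snd ℝ ℝ (ℝ×ℝ×ℝ×ℝ)))) p :=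
    HasFDerivAt.prodMk hasFDerivAt_fst (hasFDerivAt_fst.comp p hasFDerivAt_snd)
  have h7c := (h7.hasFDerivAt).comp p hbp
  have h8c := (h8.hasFDerivAt).comp p hbp
  have h9c := (h9.hasFDerivAt).comp p hbp
  have h10c := (h10.hasFDerivAt).comp p hbp
  have hvT : HasFDerivAt vT ((ContinuousLinearMap.fst ℝ ℝ (ℝ×ℝ)).comp
      ((ContinuousLinearMap.snd ℝ ℝ (ℝ×ℝ×ℝ)).comp (ContinuousLinearMap.snd ℝ ℝ (ℝ×ℝ×ℝ×ℝ)))) p := by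
    exact hasFDerivAt_fst.comp p (hasFDerivAt_snd.comp p hasFDerivAt_snd)
  have hvR : HasFDerivAt vR ((ContinuousLinearMap.fst ℝ ℝ ℝ).comp
      ((ContinuousLinearMap.snd ℝ ℝ (ℝ×ℝ)).comp
      ((ContinuousLinearMap.snd ℝ ℝ (ℝ×ℝ×ℝ)).comp (ContinuousLinearMap.snd ℝ ℝ (ℝ×ℝ×ℝ×ℝ))))) p := by
    exact hasFDerivAt_fst.comp p (hasFDerivAt_snd.comp p (hasFDerivAt_snd.comp p hasFDerivAt_snd))
  have hvW : HasFDerivAt vW ((ContinuousLinearMap.snd ℝ ℝ ℝ).comp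
      ((ContinuousLinearMap.snd ℝ ℝ (ℝ×ℝ)).comp
      ((ContinuousLinearMap.snd ℝ ℝ (ℝ×ℝ×ℝ)).comp (ContinuousLinearMap.snd ℝ ℝ (ℝ×ℝ×ℝ×ℝ))))) p := by
    exact hasFDerivAt_snd.comp p (hasFDerivAt_snd.comp p (hasFDerivAt_snd.comp p hasFDerivAt_snd))
  have haa : HasFDerivAt (fun p : P5 => aa k (bp p)) _ p := hasFDerivAt_div' h7c h10c hk10
  have hbb : HasFDerivAt (fun p : P5 => bb k (bp p)) _ p := hasFDerivAt_div' h8c h10c hk10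
  have hcc : HasFDerivAt (fun p : P5 => cc k (bp p)) _ p :=
    hasFDerivAt_div' ((h9c.mul h10c).sub (h7c.mul h8c)) (hasFDerivAt_sq h10c) (pow_ne_zero 2 hk10)
  have huV : HasFDerivAt (uV k) _ p := hvT.sub (haa.mul hvR)
  have hvV : HasFDerivAt (vV k) _ p :=
    ((hcc.mul (hasFDerivAt_sq hvR)).add (((hbb.const_mul 2).mul hvT).mul hvR)).sub (hasFDerivAt_sq hvW)
  have hzV : HasFDerivAt (zV k) _ p := hasFDerivAt_div' hvV (hasFDerivAt_sq huV) (pow_ne_zero 2 hu)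
  have hg : HasFDerivAt (fun p : P5 => (p.1, p.2.1, zV k p)) _ p :=
    HasFDerivAt.prodMk hasFDerivAt_fst (HasFDerivAt.prodMk (hasFDerivAt_fst.comp p hasFDerivAt_snd) hzV)
  have hXi := (hΞd.hasFDerivAt).comp p hg
  have hL : HasFDerivAt (LXi k Ξ) _ p := (hasFDerivAt_sq huV).mul hXi
  have hfd := hL.fderiv
  constructor
  · unfold delT pT pTd pRd pW
    rw [hfd]
    simp only [ContinuousLinearMap.add_apply, ContinuousLinearMap.smul_apply,
      ContinuousLinearMap.comp_apply, ContinuousLinearMap.sub_apply,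
      ContinuousLinearMap.prod_apply, ContinuousLinearMap.coe_fst',
      ContinuousLinearMap.coe_snd', smul_eq_mul, fderiv2_eval, fderiv3_eval,
      Pi.mul_apply, Pi.add_apply, Pi.sub_apply]
    have ht7 : dt2 (k 7) (bp p) = k 7 (bp p) * k 8 (bp p) - k 1 (bp p) * k 7 (bp p)
        - k 2 (bp p) * k 10 (bp p) - aa k (bp p) * a7 k (bp p) := by
      unfold a6 at e1; linarith
    have ht8 : dt2 (k 8) (bp p) = k 1 (bp p) * k 8 (bp p) + k 4 (bp p) * k 9 (bp p)
        - (k 8 (bp p))^2 - bb k (bp p) * a7 k (bp p) := by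
      unfold a8 at e2; linarith
    have ht9 : dt2 (k 9) (bp p) = k 2 (bp p) * k 8 (bp p) + k 6 (bp p) * k 9 (bp p)
        - k 8 (bp p) * k 9 (bp p) - (aa k (bp p) * bb k (bp p) + cc k (bp p)) * a7 k (bp p) := by
      unfold a9 at e3; linarith
    rw [ht7, ht8, ht9]
    simp only [a7, Mc, Mtc, Function.comp_apply]
    have hK7 : k 7 (bp p) = aa k (bp p) * k 10 (bp p) := by unfold aa; field_simp
    have hK8 : k 8 (bp p) = bb k (bp p) * k 10 (bp p) := by unfold bb; field_simp
    have hK9 : k 9 (bp p) = (cc k (bp p) + aa k (bp p) * bb k (bp p)) * k 10 (bp p) := by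
      unfold cc aa bb; field_simp; ring
    have hZ : zV k p = vV k p / uV k p ^ 2 := rfl
    have hVV : vV k p = cc k (bp p) * vR p ^ 2 + 2 * bb k (bp p) * vT p * vR p - vW p ^ 2 := rfl
    have hTd : vT p = uV k p + aa k (bp p) * vR p := by unfold uV; ring
    generalize Ξ (p.1, p.2.1, zV k p) = X0 at *
    generalize dT3 Ξ (p.1, p.2.1, zV k p) = X1 at *
    generalize dR3 Ξ (p.1, p.2.1, zV k p) = X2 at *
    generalize dZ3 Ξ (p.1, p.2.1, zV k p) = X3 at *
    rw [hZ, hVV, hTd, hK7, hK8, hK9]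
    field_simp
    ring
  · unfold delR pR pTd pRd pW
    rw [hfd]
    simp only [ContinuousLinearMap.add_apply, ContinuousLinearMap.smul_apply,
      ContinuousLinearMap.comp_apply, ContinuousLinearMap.sub_apply,
      ContinuousLinearMap.prod_apply, ContinuousLinearMap.coe_fst',
      ContinuousLinearMap.coe_snd', smul_eq_mul, fderiv2_eval, fderiv3_eval,
      Pi.mul_apply, Pi.add_apply, Pi.sub_apply]
    have hr7 : dr2 (k 7) (bp p) = k 7 (bp p) * k 9 (bp p) - k 2 (bp p) * k 7 (bp p)
        - k 3 (bp p) * k 10 (bp p) - aa k (bp p) * a11 k (bp p) := by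
      unfold a10 at e4; linarith
    have hr8 : dr2 (k 8) (bp p) = k 2 (bp p) * k 8 (bp p) + k 6 (bp p) * k 9 (bp p)
        - k 8 (bp p) * k 9 (bp p) - bb k (bp p) * a11 k (bp p) := by
      unfold a12 at e5; linarith
    have hr9 : dr2 (k 9) (bp p) = k 3 (bp p) * k 8 (bp p) + k 5 (bp p) * k 9 (bp p)
        - (k 9 (bp p))^2 - (aa k (bp p) * bb k (bp p) + cc k (bp p)) * a11 k (bp p) := by
      unfold a13 at e6; linarith
    rw [hr7, hr8, hr9]
    simp only [a11, Nc, Ntc, Function.comp_apply]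
    have hK7 : k 7 (bp p) = aa k (bp p) * k 10 (bp p) := by unfold aa; field_simp
    have hK8 : k 8 (bp p) = bb k (bp p) * k 10 (bp p) := by unfold bb; field_simp
    have hK9 : k 9 (bp p) = (cc k (bp p) + aa k (bp p) * bb k (bp p)) * k 10 (bp p) := by
      unfold cc aa bb; field_simp; ring
    have hZ : zV k p = vV k p / uV k p ^ 2 := rfl
    have hVV : vV k p = cc k (bp p) * vR p ^ 2 + 2 * bb k (bp p) * vT p * vR p - vW p ^ 2 := rfl
    have hTd : vT p = uV k p + aa k (bp p) * vR p := by unfold uV; ring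
    generalize Ξ (p.1, p.2.1, zV k p) = X0 at *
    generalize dT3 Ξ (p.1, p.2.1, zV k p) = X1 at *
    generalize dR3 Ξ (p.1, p.2.1, zV k p) = X2 at *
    generalize dZ3 Ξ (p.1, p.2.1, zV k p) = X3 at *
    rw [hZ, hVV, hTd, hK7, hK8, hK9]
    field_simp
    ring

/-- Lemma 5 of the paper. Under the curvature relations, `L = u²Ξ(t,r,z)`
satisfies `δ_t L = 0` and `δ_r L = 0` iff `Ξ` satisfies the two linear first-order PDEs
`∂_tΞ = MΞ − (M̃z − 2k₄b)∂_zΞ` and `∂_rΞ = NΞ − (Ñz − 2k₆b)∂_zΞ`. -/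
theorem stmt13 (Ω : Set P2) (hΩopen : IsOpen Ω) (hΩne : Ω.Nonempty)
    (k : ℕ → P2 → ℝ) (hk : ∀ i, ContDiffOn ℝ (⊤ : ℕ∞) (k i) Ω)
    (hk10 : ∀ q ∈ Ω, k 10 q ≠ 0)
    (hrel : ∀ q ∈ Ω,
      a6 k q = aa k q * a7 k q ∧
      a8 k q = bb k q * a7 k q ∧
      a9 k q = (aa k q * bb k q + cc k q) * a7 k q ∧
      a10 k q = aa k q * a11 k q ∧
      a12 k q = bb k q * a11 k q ∧
      a13 k q = (aa k q * bb k q + cc k q) * a11 k q)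
    (I : Set ℝ) (hIopen : IsOpen I) (hIne : I.Nonempty) (hIconn : I.OrdConnected)
    (hS : ∀ q ∈ Ω, ∀ z0 ∈ I, (Sset k q z0).Nonempty)
    (Ξ : ℝ × ℝ × ℝ → ℝ) (hΞ : ContDiffOn ℝ (⊤ : ℕ∞) Ξ (OI Ω I)) :
    (∀ p : P5, bp p ∈ Ω → 0 < uV k p → 0 < vW p → zV k p ∈ I →
      delT k (LXi k Ξ) p = 0 ∧ delR k (LXi k Ξ) p = 0) ↔
    (∀ s ∈ OI Ω I,
      dT3 Ξ s = Mc k (s.1, s.2.1) * Ξ s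
        - (Mtc k (s.1, s.2.1) * s.2.2 - 2 * k 4 (s.1, s.2.1) * bb k (s.1, s.2.1)) * dZ3 Ξ s ∧
      dR3 Ξ s = Nc k (s.1, s.2.1) * Ξ s
        - (Ntc k (s.1, s.2.1) * s.2.2 - 2 * k 6 (s.1, s.2.1) * bb k (s.1, s.2.1)) * dZ3 Ξ s) := by
  have hOIopen : IsOpen (OI Ω I) := by
    have h1 : IsOpen {s : ℝ × ℝ × ℝ | (s.1, s.2.1) ∈ Ω} :=
      hΩopen.preimage (by fun_prop : Continuous fun s : ℝ × ℝ × ℝ => (s.1, s.2.1))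
    have h2 : IsOpen {s : ℝ × ℝ × ℝ | s.2.2 ∈ I} :=
      hIopen.preimage (by fun_prop : Continuous fun s : ℝ × ℝ × ℝ => s.2.2)
    exact h1.inter h2
  have hdk : ∀ i, ∀ q ∈ Ω, DifferentiableAt ℝ (k i) q := fun i q hq =>
    ((hk i).differentiableOn (by simp)).differentiableAt (hΩopen.mem_nhds hq)
  have hdΞ : ∀ s ∈ OI Ω I, DifferentiableAt ℝ Ξ s := fun s hs =>
    (hΞ.differentiableOn (by simp)).differentiableAt (hOIopen.mem_nhds hs)
  constructor
  · intro H s hs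
    obtain ⟨hq, hz⟩ := hs
    obtain ⟨⟨x, y⟩, h1, h2⟩ := hS _ hq _ hz
    simp only at h1 h2
    set w : ℝ := Real.sqrt (cc k (s.1, s.2.1) * y^2 + 2 * bb k (s.1, s.2.1) * x * y
      - s.2.2 * (x - aa k (s.1, s.2.1) * y)^2) with hwdef
    set p : P5 := (s.1, s.2.1, x, y, w) with hpdef
    have hu0 : uV k p = x - aa k (s.1, s.2.1) * y := rfl
    have hvv : vV k p = cc k (s.1, s.2.1) * y^2 + 2 * bb k (s.1, s.2.1) * x * y - w^2 := rfl
    have hune : x - aa k (s.1, s.2.1) * y ≠ 0 := ne_of_gt h1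
    have hw : 0 < w := Real.sqrt_pos.2 h2
    have hw2 : w^2 = cc k (s.1, s.2.1) * y^2 + 2 * bb k (s.1, s.2.1) * x * y
        - s.2.2 * (x - aa k (s.1, s.2.1) * y)^2 := Real.sq_sqrt h2.le
    have hzV : zV k p = s.2.2 := by
      unfold zV
      rw [hvv, hu0, hw2]
      rw [div_eq_iff (pow_ne_zero 2 hune)]; ring
    have hups : 0 < uV k p := by rw [hu0]; exact h1
    obtain ⟨hT, hR⟩ := H p hq hups hw (by rw [hzV]; exact hz)
    have hrl := hrel _ hq
    have K := key k Ξ p (hdk 7 _ hq) (hdk 8 _ hq) (hdk 9 _ hq) (hdk 10 _ hq)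
      (hk10 _ hq) (ne_of_gt hups)
      (hdΞ (p.1, p.2.1, zV k p) ⟨hq, by rw [hzV]; exact hz⟩)
      hrl.1 hrl.2.1 hrl.2.2.1 hrl.2.2.2.1 hrl.2.2.2.2.1 hrl.2.2.2.2.2
    have hps : (p.1, p.2.1, zV k p) = s := by rw [hzV]
    have hbp2 : bp p = (s.1, s.2.1) := rfl
    rw [hps, hbp2, hzV] at K
    have hune2 : (uV k p)^2 ≠ 0 := pow_ne_zero 2 (ne_of_gt hups)
    constructor
    · have hE := (mul_eq_zero.mp (K.1 ▸ hT)).resolve_left hune2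
      linarith
    · have hE := (mul_eq_zero.mp (K.2 ▸ hR)).resolve_left hune2
      linarith
  · intro H p hq hup hw hz
    have hrl := hrel _ hq
    have hs : (p.1, p.2.1, zV k p) ∈ OI Ω I := ⟨hq, hz⟩
    have K := key k Ξ p (hdk 7 _ hq) (hdk 8 _ hq) (hdk 9 _ hq) (hdk 10 _ hq)
      (hk10 _ hq) (ne_of_gt hup) (hdΞ _ hs)
      hrl.1 hrl.2.1 hrl.2.2.1 hrl.2.2.2.1 hrl.2.2.2.2.1 hrl.2.2.2.2.2
    rw [show bp p = (p.1, p.2.1) from rfl] at K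
    obtain ⟨hT, hR⟩ := H _ hs
    simp only at hT hR
    constructor
    · rw [K.1]
      have : dT3 Ξ (p.1, p.2.1, zV k p) - Mc k (p.1, p.2.1) * Ξ (p.1, p.2.1, zV k p)
          + (Mtc k (p.1, p.2.1) * zV k p - 2 * k 4 (p.1, p.2.1) * bb k (p.1, p.2.1))
            * dZ3 Ξ (p.1, p.2.1, zV k p) = 0 := by
        rw [hT]; ring
      rw [this, mul_zero]
    · rw [K.2]
      have : dR3 Ξ (p.1, p.2.1, zV k p) - Nc k (p.1, p.2.1) * Ξ (p.1, p.2.1, zV k p)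
          + (Ntc k (p.1, p.2.1) * zV k p - 2 * k 6 (p.1, p.2.1) * bb k (p.1, p.2.1))
            * dZ3 Ξ (p.1, p.2.1, zV k p) = 0 := by
        rw [hR]; ring
      rw [this, mul_zero]
end
end

section
/- Assume k₁₀ ≠ 0 on Ω and that the curvature relations a₆ = a·a₇, a₈ = b·a₇, a₉ = (ab+c)·a₇, a₁₀ = a·a₁₁, a₁₂ = b·a₁₁, a₁₃ = (ab+c)·a₁₁ hold on Ω. Then, with M = 2(k₁ − k₄a), M̃ = M − 2k₈, N = 2(k₂ − k₆a), Ñ = N − 2k₉, the following identities hold on Ω: F = ½(∂_tN − ∂_rM), D = ½(∂_tÑ − ∂_rM̃), and E = b(k₆M̃ − k₄Ñ) + ∂_r(k₄b) − ∂_t(k₆b). -/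
noncomputable section
open Real Set

section helpers
variable {f g : P2 → ℝ} {q v : P2}

lemma fdv_mul (hf : DifferentiableAt ℝ f q) (hg : DifferentiableAt ℝ g q) :
    fderiv ℝ (fun x => f x * g x) q v = fderiv ℝ f q v * g q + f q * fderiv ℝ g q v := by
  rw [fderiv_fun_mul hf hg]; simp; ring

lemma fdv_sub (hf : DifferentiableAt ℝ f q) (hg : DifferentiableAt ℝ g q) :
    fderiv ℝ (fun x => f x - g x) q v = fderiv ℝ f q v - fderiv ℝ g q v := by
  rw [fderiv_fun_sub hf hg]; simp

lemma fdv_cmul (c : ℝ) (hf : DifferentiableAt ℝ f q) :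
    fderiv ℝ (fun x => c * f x) q v = c * fderiv ℝ f q v := by
  rw [fderiv_const_mul hf]; simp

lemma fdv_inv (hg : DifferentiableAt ℝ g q) (h0 : g q ≠ 0) :
    fderiv ℝ (fun x => (g x)⁻¹) q v = -fderiv ℝ g q v / (g q)^2 := by
  have h := ((hasFDerivAt_inv' (𝕜 := ℝ) h0).comp q hg.hasFDerivAt).fderiv
  rw [show (fun x => (g x)⁻¹) = Inv.inv ∘ g from rfl, h]
  simp only [ContinuousLinearMap.comp_apply, ContinuousLinearMap.neg_apply,
    ContinuousLinearMap.mulLeftRight_apply]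
  field_simp

lemma fdv_div (hf : DifferentiableAt ℝ f q) (hg : DifferentiableAt ℝ g q) (h0 : g q ≠ 0) :
    fderiv ℝ (fun x => f x / g x) q v
      = (fderiv ℝ f q v * g q - f q * fderiv ℝ g q v) / (g q)^2 := by
  have h : (fun x => f x / g x) = fun x => f x * (g x)⁻¹ := by
    funext x; rw [div_eq_mul_inv]
  rw [h, fdv_mul (g := fun x => (g x)⁻¹) hf (hg.inv h0), fdv_inv hg h0]
  field_simp
  ring

lemma dav_div (hf : DifferentiableAt ℝ f q) (hg : DifferentiableAt ℝ g q) (h0 : g q ≠ 0) :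
    DifferentiableAt ℝ (fun x => f x / g x) q := by
  have h : (fun x => f x / g x) = fun x => f x * (g x)⁻¹ := by
    funext x; rw [div_eq_mul_inv]
  rw [h]; exact hf.mul (hg.inv h0)

end helpers

set_option maxHeartbeats 2000000 in
/-- Under the curvature relations, the coefficients `D`, `E`, `F` are expressed
through derivatives of `M`, `M̃`, `N`, `Ñ`: `F = ½(∂_tN − ∂_rM)`, `D = ½(∂_tÑ − ∂_rM̃)` and
`E = b(k₆M̃ − k₄Ñ) + ∂_r(k₄b) − ∂_t(k₆b)`. -/
theorem stmt14 (Ω : Set P2) (hΩopen : IsOpen Ω) (hΩne : Ω.Nonempty)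
    (k : ℕ → P2 → ℝ) (hk : ∀ i, ContDiffOn ℝ (⊤ : ℕ∞) (k i) Ω)
    (hk10 : ∀ q ∈ Ω, k 10 q ≠ 0)
    (hrel : ∀ q ∈ Ω,
      a6 k q = aa k q * a7 k q ∧
      a8 k q = bb k q * a7 k q ∧
      a9 k q = (aa k q * bb k q + cc k q) * a7 k q ∧
      a10 k q = aa k q * a11 k q ∧
      a12 k q = bb k q * a11 k q ∧
      a13 k q = (aa k q * bb k q + cc k q) * a11 k q) :
    ∀ q ∈ Ω,
      Fc k q = (1 / 2) * (dt2 (Nc k) q - dr2 (Mc k) q) ∧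
      Dc k q = (1 / 2) * (dt2 (Ntc k) q - dr2 (Mtc k) q) ∧
      Ec k q = bb k q * (k 6 q * Mtc k q - k 4 q * Ntc k q)
        + dr2 (fun q' => k 4 q' * bb k q') q - dt2 (fun q' => k 6 q' * bb k q') q := by
  intro q hq
  have hmem : Ω ∈ nhds q := hΩopen.mem_nhds hq
  have hd : ∀ i, DifferentiableAt ℝ (k i) q := fun i =>
    ((hk i).contDiffAt hmem).differentiableAt (by simp)
  have h10 : k 10 q ≠ 0 := hk10 q hq
  have haf : aa k = fun x => k 7 x / k 10 x := rfl
  have hbf : bb k = fun x => k 8 x / k 10 x := rfl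
  have hda : DifferentiableAt ℝ (aa k) q := by
    rw [haf]; exact dav_div (hd 7) (hd 10) h10
  have hdb : DifferentiableAt ℝ (bb k) q := by
    rw [hbf]; exact dav_div (hd 8) (hd 10) h10
  obtain ⟨h6, h8, h9, h10r, h12, h13⟩ := hrel q hq
  -- derivative of aa and bb in any direction, as quotients
  have hdaV : ∀ v : P2, fderiv ℝ (aa k) q v
      = (fderiv ℝ (k 7) q v * k 10 q - k 7 q * fderiv ℝ (k 10) q v) / (k 10 q)^2 := by
    intro v; rw [haf]; exact fdv_div (hd 7) (hd 10) h10
  have hdbV : ∀ v : P2, fderiv ℝ (bb k) q v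
      = (fderiv ℝ (k 8) q v * k 10 q - k 8 q * fderiv ℝ (k 10) q v) / (k 10 q)^2 := by
    intro v; rw [hbf]; exact fdv_div (hd 8) (hd 10) h10
  -- solve the curvature relations for the derivatives of k7, k8
  have hT7 : fderiv ℝ (k 7) q (1,0)
      = k 7 q * k 8 q - k 1 q * k 7 q - k 2 q * k 10 q
        - (k 7 q / k 10 q) * (-(fderiv ℝ (k 10) q (1,0)) + k 8 q * k 10 q
          - k 4 q * k 7 q - k 6 q * k 10 q) := by
    simp only [a6, a7, aa, dt2] at h6; linarith
  have hR7 : fderiv ℝ (k 7) q (0,1)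
      = k 7 q * k 9 q - k 2 q * k 7 q - k 3 q * k 10 q
        - (k 7 q / k 10 q) * (-(fderiv ℝ (k 10) q (0,1)) + k 9 q * k 10 q
          - k 6 q * k 7 q - k 5 q * k 10 q) := by
    simp only [a10, a11, aa, dr2] at h10r; linarith
  have hT8 : fderiv ℝ (k 8) q (1,0)
      = k 1 q * k 8 q + k 4 q * k 9 q - (k 8 q)^2
        - (k 8 q / k 10 q) * (-(fderiv ℝ (k 10) q (1,0)) + k 8 q * k 10 q
          - k 4 q * k 7 q - k 6 q * k 10 q) := by
    simp only [a8, a7, bb, dt2] at h8; linarith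
  have hR8 : fderiv ℝ (k 8) q (0,1)
      = k 2 q * k 8 q + k 6 q * k 9 q - k 8 q * k 9 q
        - (k 8 q / k 10 q) * (-(fderiv ℝ (k 10) q (0,1)) + k 9 q * k 10 q
          - k 6 q * k 7 q - k 5 q * k 10 q) := by
    simp only [a12, a11, bb, dr2] at h12; linarith
  -- values of the four horizontal derivatives of aa, bb
  have hat : fderiv ℝ (aa k) q (1,0)
      = k 4 q * (k 7 q / k 10 q)^2 + (k 6 q - k 1 q) * (k 7 q / k 10 q) - k 2 q := by
    rw [hdaV, hT7]; field_simp; ring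
  have har : fderiv ℝ (aa k) q (0,1)
      = k 6 q * (k 7 q / k 10 q)^2 + (k 5 q - k 2 q) * (k 7 q / k 10 q) - k 3 q := by
    rw [hdaV, hR7]; field_simp; ring
  have hbt : fderiv ℝ (bb k) q (1,0)
      = (k 1 q * k 8 q + k 4 q * k 9 q - 2 * (k 8 q)^2
          + k 4 q * (k 7 q / k 10 q) * k 8 q + k 6 q * k 8 q) / k 10 q := by
    rw [hdbV, hT8]; field_simp; ring
  have hbr : fderiv ℝ (bb k) q (0,1)
      = (k 2 q * k 8 q + k 6 q * k 9 q - 2 * k 8 q * k 9 q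
          + k 6 q * (k 7 q / k 10 q) * k 8 q + k 5 q * k 8 q) / k 10 q := by
    rw [hdbV, hR8]; field_simp; ring
  -- derivatives of M, N in any direction
  have hdMN : ∀ (i j : ℕ), ∀ v : P2, fderiv ℝ (fun x => 2 * (k i x - k j x * aa k x)) q v
      = 2 * (fderiv ℝ (k i) q v
          - (fderiv ℝ (k j) q v * aa k q + k j q * fderiv ℝ (aa k) q v)) := by
    intro i j v
    rw [fdv_cmul 2 (f := fun x => k i x - k j x * aa k x) ((hd i).sub ((hd j).mul hda)),
      fdv_sub (g := fun x => k j x * aa k x) (hd i) ((hd j).mul hda),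
      fdv_mul (hd j) hda]
  have hNf : Nc k = fun x => 2 * (k 2 x - k 6 x * aa k x) := rfl
  have hMf : Mc k = fun x => 2 * (k 1 x - k 4 x * aa k x) := rfl
  have hdNc : DifferentiableAt ℝ (Nc k) q := by
    rw [hNf]; exact ((hd 2).sub ((hd 6).mul hda)).const_mul 2
  have hdMc : DifferentiableAt ℝ (Mc k) q := by
    rw [hMf]; exact ((hd 1).sub ((hd 4).mul hda)).const_mul 2
  have hNtf : Ntc k = fun x => Nc k x - 2 * k 9 x := rfl
  have hMtf : Mtc k = fun x => Mc k x - 2 * k 8 x := rfl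
  have hNtV : ∀ v : P2, fderiv ℝ (Ntc k) q v
      = fderiv ℝ (Nc k) q v - 2 * fderiv ℝ (k 9) q v := by
    intro v
    rw [hNtf, fdv_sub hdNc ((hd 9).const_mul 2), fdv_cmul 2 (hd 9)]
  have hMtV : ∀ v : P2, fderiv ℝ (Mtc k) q v
      = fderiv ℝ (Mc k) q v - 2 * fderiv ℝ (k 8) q v := by
    intro v
    rw [hMtf, fdv_sub hdMc ((hd 8).const_mul 2), fdv_cmul 2 (hd 8)]
  refine ⟨?_, ?_, ?_⟩
  · -- F identity
    simp only [Fc, a1, a3, aa, dt2, dr2]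
    rw [hNf, hMf, hdMN 2 6 (1,0), hdMN 1 4 (0,1), hat, har]
    simp only [aa]
    field_simp
    ring
  · -- D identity
    have g1 : Fc k q = (1 / 2) * (dt2 (Nc k) q - dr2 (Mc k) q) := by
      simp only [Fc, a1, a3, aa, dt2, dr2]
      rw [hNf, hMf, hdMN 2 6 (1,0), hdMN 1 4 (0,1), hat, har]
      simp only [aa]
      field_simp
      ring
    have hD : Dc k q = Fc k q + a5 k q := by
      simp only [Dc, Fc]
    rw [hD, g1, show dt2 (Ntc k) q = fderiv ℝ (Ntc k) q (1,0) from rfl,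
      show dr2 (Mtc k) q = fderiv ℝ (Mtc k) q (0,1) from rfl, hNtV, hMtV]
    simp only [a5, dt2, dr2]
    ring
  · -- E identity
    have hK4 : dr2 (fun q' => k 4 q' * bb k q') q
        = fderiv ℝ (k 4) q (0,1) * bb k q + k 4 q * fderiv ℝ (bb k) q (0,1) :=
      fdv_mul (hd 4) hdb
    have hK6 : dt2 (fun q' => k 6 q' * bb k q') q
        = fderiv ℝ (k 6) q (1,0) * bb k q + k 6 q * fderiv ℝ (bb k) q (1,0) :=
      fdv_mul (hd 6) hdb
    rw [hK4, hK6, hbt, hbr]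
    simp only [Ec, a3, Mtc, Ntc, Mc, Nc, aa, bb, dt2, dr2]
    field_simp
    ring
end
end
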